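/- arXiv:1701.03944 — 7 statements merged into one kernel-verified Lean document; each statement's English description precedes it below -/
import Mathlib

section
/- Let n ≥ 2 and let G be a subset of N_n containing, for each pair i < j in Q_n, a transformation of type {i,j}. Let G' be the set of restrictions of the elements of G to Q_n ∖ {0} (each such restriction is a transformation of Q_n ∖ {0}, since elements of N_n never take the value 0). If the semigroup of transformations of Q_n ∖ {0} generated by G' contains every permutation of Q_n ∖ {0}, then G generates N_n as a semigroup. -/
/-- The rank of a transformation of `Fin n`: the cardinality of its image. -/
def rank {n : ℕ} (t : Fin n → Fin n) : ℕ := (Finset.univ.image t).card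

/-- `t` is of type `{i,j}`: `i < j`, `t` has rank `n-1`, and `t i = t j`. -/
def OfType {n : ℕ} (t : Fin n → Fin n) (i j : Fin n) : Prop :=
  i < j ∧ rank t = n - 1 ∧ t i = t j

/-- The full non-returning semigroup of degree `n`. -/
def Nn (n : ℕ) : Set (Fin n → Fin n) := {t | ∀ q, (t q).val ≠ 0}

/-- The semigroup generated by `G` under (left-to-right) composition. -/
inductive genBy {α : Type} (G : Set (α → α)) : (α → α) → Prop
  | base {t : α → α} : t ∈ G → genBy G t
  | comp {s t : α → α} : genBy G s → genBy G t → genBy G (t ∘ s)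


/-!
An element `t` of `N_n` of rank `n - 1` has image `Q_n ∖ {0}` and identifies exactly one pair
`i < j`. A generator `g` of type `{i,j}` has the same kernel and the same image, so `t` is `g`
followed by a permutation of `Q_n ∖ {0}`; by hypothesis that permutation is a product of
restrictions of generators, hence `t` is generated. An element of smaller rank is an element of
rank `n - 1` applied after an element of `N_n` of rank one higher, so downward induction on the
rank covers all of `N_n`.
-/

open Finset

namespace genBy

variable {α : Type}

lemma mem_of_subset {G S : Set (α → α)} (hG : G ⊆ S)
    (hS : ∀ ⦃s t⦄, s ∈ S → t ∈ S → t ∘ s ∈ S) {t : α → α} (ht : genBy G t) : t ∈ S := by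
  induction ht with
  | base h => exact hG h
  | comp _ _ ihs iht => exact hS ihs iht

lemma exists_extension {p : α → Prop} {G : Set (α → α)} {G' : Set ({a // p a} → {a // p a})}
    (hG' : ∀ f ∈ G', ∃ g ∈ G, ∀ x, (f x).val = g x.val) {f : {a // p a} → {a // p a}}
    (hf : genBy G' f) : ∃ g, genBy G g ∧ ∀ x, (f x).val = g x.val := by
  induction hf with
  | base h =>
    obtain ⟨g, hg, hgf⟩ := hG' _ h
    exact ⟨g, base hg, hgf⟩
  | @comp s t _ _ ihs iht =>
    obtain ⟨gs, hgs, hgs_eq⟩ := ihs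
    obtain ⟨gt, hgt, hgt_eq⟩ := iht
    exact ⟨gt ∘ gs, comp hgs hgt, fun x => by simp only [Function.comp_apply, hgt_eq, hgs_eq]⟩

end genBy

section Collapse

variable {α β : Type*} [Fintype α] [DecidableEq α] [DecidableEq β]

lemma injOn_erase_of_card_image_eq_pred {t : α → β} {i j : α}
    (hr : #(univ.image t) = Fintype.card α - 1) (hij : i ≠ j) (hte : t i = t j) :
    Set.InjOn t (univ.erase j : Finset α) := by
  apply injOn_of_card_image_eq
  have himage : (univ.erase j).image t = univ.image t := by
    refine Subset.antisymm (image_subset_image (erase_subset _ _)) fun b hb => ?_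
    obtain ⟨a, -, rfl⟩ := mem_image.mp hb
    by_cases ha : a = j
    · exact mem_image.mpr ⟨i, mem_erase.mpr ⟨hij, mem_univ _⟩, ha ▸ hte⟩
    · exact mem_image_of_mem t (mem_erase.mpr ⟨ha, mem_univ _⟩)
  rw [himage, hr, card_erase_of_mem (mem_univ _), card_univ]

/-- A map of rank `|α| - 1` identifying `i` and `j` identifies nothing else. -/
lemma apply_eq_apply_of_card_image_eq_pred {t g : α → β} {i j : α}
    (hr : #(univ.image t) = Fintype.card α - 1) (hij : i ≠ j) (hti : t i = t j)
    (hgi : g i = g j) {x y : α} (hxy : t x = t y) : g x = g y := by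
  have hj := injOn_erase_of_card_image_eq_pred hr hij hti
  have hi := injOn_erase_of_card_image_eq_pred hr hij.symm hti.symm
  by_contra hne
  have hxy' : x ≠ y := fun h => hne (h ▸ rfl)
  have h1 : x = j ∨ y = j := by
    by_contra! h
    exact hxy' (hj (by simpa using h.1) (by simpa using h.2) hxy)
  have h2 : x = i ∨ y = i := by
    by_contra! h
    exact hxy' (hi (by simpa using h.1) (by simpa using h.2) hxy)
  rcases h1 with rfl | rfl <;> rcases h2 with rfl | rfl <;> simp_all

lemma card_image_update_of_apply_eq {t : α → β} {a b : α} {c : β} (hab : a ≠ b)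
    (heq : t a = t b) (hc : c ∉ univ.image t) :
    #(univ.image (Function.update t a c)) = #(univ.image t) + 1 := by
  have himage : univ.image (Function.update t a c) = insert c (univ.image t) := by
    ext x
    simp only [mem_image, mem_insert, mem_univ, true_and]
    constructor
    · rintro ⟨q, rfl⟩
      by_cases h : q = a
      · exact Or.inl (by rw [h, Function.update_self])
      · exact Or.inr ⟨q, (Function.update_of_ne h _ _).symm⟩
    · rintro (rfl | ⟨q, rfl⟩)
      · exact ⟨a, Function.update_self _ _ _⟩
      · by_cases h : q = a
        · exact ⟨b, by rw [Function.update_of_ne hab.symm, ← heq, h]⟩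
        · exact ⟨q, Function.update_of_ne h _ _⟩
  rw [himage, card_insert_of_notMem hc]

end Collapse

lemma exists_perm_of_apply_eq_apply_iff {α β : Type*} {p : β → Prop} [Finite {b // p b}]
    {t g : α → β} (ht : ∀ a, p (t a)) (hg : ∀ a, p (g a)) (hg_surj : ∀ b, p b → ∃ a, g a = b)
    (hker : ∀ x y, t x = t y ↔ g x = g y) :
    ∃ σ : Equiv.Perm {b // p b}, ∀ a, (σ ⟨g a, hg a⟩).val = t a := by
  choose pick hpick using hg_surj
  let f : {b // p b} → {b // p b} := fun b => ⟨t (pick b b.2), ht _⟩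
  have hf : Function.Injective f := fun b b' hbb' => by
    have := (hker _ _).mp (congrArg Subtype.val hbb')
    rw [hpick, hpick] at this
    exact Subtype.ext this
  exact ⟨Equiv.ofBijective f (Finite.injective_iff_bijective.mp hf),
    fun a => (hker _ _).mpr (hpick _ _)⟩

section Nn

variable {n : ℕ}

lemma comp_mem_Nn {t : Fin n → Fin n} (ht : t ∈ Nn n) (s : Fin n → Fin n) : t ∘ s ∈ Nn n :=
  fun q => ht (s q)

lemma exists_lt_apply_eq_of_rank_lt {t : Fin n → Fin n} (hr : rank t < n) :
    ∃ i j, i < j ∧ t i = t j := by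
  by_contra! h
  have hinj : Function.Injective t := fun a b hab => by
    by_contra hne
    rcases lt_or_gt_of_ne hne with hlt | hlt
    · exact h a b hlt hab
    · exact h b a hlt hab.symm
  rw [rank, card_image_of_injective _ hinj, card_univ, Fintype.card_fin] at hr
  exact lt_irrefl _ hr

variable [NeZero n]

lemma card_univ_erase_zero : #(univ.erase (0 : Fin n)) = n - 1 := by
  rw [card_erase_of_mem (mem_univ _), card_univ, Fintype.card_fin]

lemma image_subset_erase_zero {t : Fin n → Fin n} (ht : t ∈ Nn n) :
    univ.image t ⊆ univ.erase 0 := fun _ hb => by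
  obtain ⟨a, -, rfl⟩ := mem_image.mp hb
  exact mem_erase.mpr ⟨Fin.val_ne_zero_iff.mp (ht a), mem_univ _⟩

lemma rank_le_of_mem_Nn {t : Fin n → Fin n} (ht : t ∈ Nn n) : rank t ≤ n - 1 :=
  card_univ_erase_zero (n := n) ▸ card_le_card (image_subset_erase_zero ht)

lemma exists_apply_eq_of_rank_eq {t : Fin n → Fin n} (ht : t ∈ Nn n) (hr : rank t = n - 1)
    {b : Fin n} (hb : b.val ≠ 0) : ∃ a, t a = b := by
  have himage : univ.image t = univ.erase 0 :=
    eq_of_subset_of_card_le (image_subset_erase_zero ht) (by rw [card_univ_erase_zero]; exact hr.ge)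
  have : b ∈ univ.image t := himage ▸ mem_erase.mpr ⟨Fin.val_ne_zero_iff.mp hb, mem_univ _⟩
  simpa using this

def collapse (c d : Fin n) : Fin n → Fin n := Function.update (Function.update id c d) 0 c

lemma collapse_mem_Nn {c d : Fin n} (hc : c.val ≠ 0) (hd : d.val ≠ 0) : collapse c d ∈ Nn n := by
  intro q
  by_cases hq0 : q = 0
  · simpa [collapse, hq0] using hc
  by_cases hqc : q = c
  · subst hqc
    simpa [collapse, hq0] using hd
  simp [collapse, hq0, hqc]

lemma rank_collapse {c d : Fin n} (hc : c.val ≠ 0) (hd : d.val ≠ 0) :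
    rank (collapse c d) = n - 1 := by
  refine le_antisymm (rank_le_of_mem_Nn (collapse_mem_Nn hc hd)) ?_
  rw [← card_univ_erase_zero]
  refine card_le_card fun b hb => mem_image.mpr ?_
  have hb0 : b ≠ 0 := (mem_erase.mp hb).1
  by_cases hbc : b = c
  · exact ⟨0, mem_univ _, by simp [collapse, hbc]⟩
  · exact ⟨b, mem_univ _, by simp [collapse, hb0, hbc]⟩

lemma exists_eq_comp_of_rank_lt {t : Fin n → Fin n} (ht : t ∈ Nn n) (hr : rank t < n - 1) :
    ∃ t' ∈ Nn n, rank t' = rank t + 1 ∧ ∃ m ∈ Nn n, rank m = n - 1 ∧ t = m ∘ t' := by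
  obtain ⟨c, hc0, hct⟩ : ∃ c ∈ univ.erase 0, c ∉ univ.image t := by
    by_contra! h
    have := card_le_card h
    rw [card_univ_erase_zero] at this
    exact absurd hr (not_lt.mpr this)
  have hc : c.val ≠ 0 := Fin.val_ne_zero_iff.mpr (mem_erase.mp hc0).1
  obtain ⟨a, b, hab, heq⟩ := exists_lt_apply_eq_of_rank_lt (t := t) (by omega)
  have hne_c : ∀ q, t q ≠ c := fun q h => hct (h ▸ mem_image_of_mem t (mem_univ q))
  -- `t'` separates the pair `a, b` by sending `a` to the missed value `c`; `collapse` merges it back.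
  refine ⟨Function.update t a c, fun q => ?_, card_image_update_of_apply_eq hab.ne heq hct,
    collapse c (t a), collapse_mem_Nn hc (ht a), rank_collapse hc (ht a), funext fun q => ?_⟩
  · by_cases hq : q = a
    · simpa [hq] using hc
    · simpa [hq] using ht q
  · by_cases hq : q = a
    · simp [hq, collapse, Fin.val_ne_zero_iff.mp hc]
    · simp [hq, collapse, Fin.val_ne_zero_iff.mp (ht q), hne_c q]

lemma genBy_of_forall_rank_eq_pred {G : Set (Fin n → Fin n)}
    (hG : ∀ t ∈ Nn n, rank t = n - 1 → genBy G t) {t : Fin n → Fin n} (ht : t ∈ Nn n) :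
    genBy G t := by
  induction hk : n - 1 - rank t generalizing t with
  | zero => exact hG t ht (le_antisymm (rank_le_of_mem_Nn ht) (by omega))
  | succ k ih =>
    obtain ⟨t', ht', hr', m, hm, hrm, rfl⟩ := exists_eq_comp_of_rank_lt ht (by omega)
    exact genBy.comp (ih ht' (by omega)) (hG m hm hrm)

lemma exists_perm_of_rank_eq {t g : Fin n → Fin n} (ht : t ∈ Nn n) (hr : rank t = n - 1)
    (hg : g ∈ Nn n) (hgr : rank g = n - 1) {i j : Fin n} (hij : i ≠ j) (hti : t i = t j)
    (hgi : g i = g j) :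
    ∃ σ : Equiv.Perm {q : Fin n // q.val ≠ 0}, ∀ a, (σ ⟨g a, hg a⟩).val = t a := by
  have hker : ∀ x y, t x = t y ↔ g x = g y := fun x y =>
    ⟨apply_eq_apply_of_card_image_eq_pred (by rwa [Fintype.card_fin]) hij hti hgi,
      apply_eq_apply_of_card_image_eq_pred (by rwa [Fintype.card_fin]) hij hgi hti⟩
  exact exists_perm_of_apply_eq_apply_iff (p := fun q : Fin n => q.val ≠ 0) ht hg
    (fun _ hb => exists_apply_eq_of_rank_eq hg hgr hb) hker

end Nn

/-- Let `G ⊆ N_n` contain a transformation of type `{i,j}` for every `i < j`, and let `G'`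
be the set of restrictions of elements of `G` to `Q_n ∖ {0}`. If the semigroup generated
by `G'` contains every permutation of `Q_n ∖ {0}`, then `G` generates `N_n`. -/
theorem stmt2 (n : ℕ) (hn : 2 ≤ n) (G : Set (Fin n → Fin n)) (hsub : G ⊆ Nn n)
    (htypes : ∀ i j : Fin n, i < j → ∃ g ∈ G, OfType g i j)
    (G' : Set ({q : Fin n // q.val ≠ 0} → {q : Fin n // q.val ≠ 0}))
    (hG' : ∀ f, f ∈ G' ↔ ∃ g ∈ G, ∀ x : {q : Fin n // q.val ≠ 0}, (f x).val = g x.val)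
    (hperm : ∀ σ : Equiv.Perm {q : Fin n // q.val ≠ 0}, genBy G' ⇑σ) :
    {t | genBy G t} = Nn n := by
  have : NeZero n := ⟨by omega⟩
  refine Set.Subset.antisymm (fun t ht => ?_) fun t ht => genBy_of_forall_rank_eq_pred ?_ ht
  · exact genBy.mem_of_subset hsub (fun _ _ _ ht => comp_mem_Nn ht _) ht
  intro t ht hr
  obtain ⟨i, j, hij, hti⟩ := exists_lt_apply_eq_of_rank_lt (t := t) (by omega)
  obtain ⟨g, hgG, -, hgr, hgi⟩ := htypes i j hij
  obtain ⟨σ, hσ⟩ := exists_perm_of_rank_eq ht hr (hsub hgG) hgr hij.ne hti hgi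
  obtain ⟨g', hg', hg'σ⟩ := genBy.exists_extension (fun f hf => (hG' f).mp hf) (hperm σ)
  have ht_eq : t = g' ∘ g := funext fun a => by rw [← hσ a, hg'σ]; rfl
  exact ht_eq ▸ genBy.comp (genBy.base hgG) hg'
end

section
/- Let n ≥ 4 and let L_n(a) be the language of the unary DFA over alphabet {a} with state set Q_n = {0,…,n-1}, initial state 0, final state set {n-1}, and transitions qa = q+1 for 0 ≤ q ≤ n-2 and (n-1)a = 1. Then L_n(a) is non-returning and has state complexity n; moreover, for every nonempty word w the quotient w⁻¹L_n(a) has state complexity n-1, while L_n(a) itself has state complexity n. -/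
/-- Left quotient of a language by a word. -/
def leftQuot {α : Type} (L : Set (List α)) (w : List α) : Set (List α) := {x | w ++ x ∈ L}

/-- The set of left quotients of `L`. -/
def quotients {α : Type} (L : Set (List α)) : Set (Set (List α)) :=
  Set.range (leftQuot L)

/-- The state complexity of `L`: the number of distinct left quotients of `L`. -/
noncomputable def stateComplexity {α : Type} (L : Set (List α)) : ℕ := Nat.card (quotients L)

/-- `L` is non-returning: no quotient by a nonempty word equals `L`. -/
def NonReturning {α : Type} (L : Set (List α)) : Prop :=
  ∀ w : List α, w ≠ [] → leftQuot L w ≠ L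

/-- The one-letter alphabet `{a}`. -/
inductive A1 : Type
  | a
  deriving DecidableEq

/-- The unary DFA with states `{0,…,n-1}` (embedded in `ℕ`; only these states are
reachable), initial state `0`, final state `n-1`, and `qa = q+1` for `q ≤ n-2`,
`(n-1)a = 1`. -/
def D4 (n : ℕ) : DFA A1 ℕ :=
  ⟨fun q _ => if q = n - 1 then 1 else q + 1, 0, {n - 1}⟩

/-- The language `L_n(a)` of the unary witness DFA. -/
def L4 (n : ℕ) : Set (List A1) := (D4 n).accepts

namespace Stmt4Aux

def stepFn (n : ℕ) (q : ℕ) : ℕ := if q = n - 1 then 1 else q + 1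

lemma evalFrom_eq (n : ℕ) (s : ℕ) (w : List A1) :
    (D4 n).evalFrom s w = (stepFn n)^[w.length] s := by
  induction w generalizing s with
  | nil => rfl
  | cons x w ih =>
    show (D4 n).evalFrom ((D4 n).step s x) w = _
    rw [ih, List.length_cons, Function.iterate_succ_apply]
    rfl

lemma iter_stepFn (n : ℕ) (hn : 4 ≤ n) (k : ℕ) :
    (stepFn n)^[k+1] 0 = k % (n-1) + 1 := by
  induction k with
  | zero =>
    show stepFn n 0 = 0 % (n-1) + 1
    rw [stepFn, if_neg (by omega), Nat.zero_mod]
  | succ k ih =>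
    rw [Function.iterate_succ_apply', ih]
    have hlt : k % (n-1) < n-1 := Nat.mod_lt _ (by omega)
    by_cases h : k % (n-1) + 1 = n - 1
    · have h0 : (k+1) % (n-1) = 0 := by
        rw [Nat.add_mod, Nat.mod_eq_of_lt (show 1 < n-1 by omega), h, Nat.mod_self]
      rw [stepFn, if_pos h, h0]
    · have h0 : (k+1) % (n-1) = k % (n-1) + 1 := by
        rw [Nat.add_mod, Nat.mod_eq_of_lt (show 1 < n-1 by omega),
          Nat.mod_eq_of_lt (show k % (n-1) + 1 < n-1 by omega)]
      rw [stepFn, if_neg h, h0]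

lemma mem_L4 (n : ℕ) (hn : 4 ≤ n) (w : List A1) :
    w ∈ L4 n ↔ w.length % (n-1) = 0 ∧ w.length ≠ 0 := by
  have key : w ∈ L4 n ↔ (stepFn n)^[w.length] 0 = n - 1 := by
    show (D4 n).eval w ∈ ({n - 1} : Set ℕ) ↔ _
    rw [show (D4 n).eval w = (stepFn n)^[w.length] 0 from evalFrom_eq n 0 w]
    exact Set.mem_singleton_iff
  rw [key]
  cases hw : w.length with
  | zero =>
    simp only [Function.iterate_zero, id_eq]
    constructor
    · intro h; omega
    · rintro ⟨-, h⟩; omega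
  | succ k =>
    rw [iter_stepFn n hn k]
    have hlt : k % (n-1) < n-1 := Nat.mod_lt _ (by omega)
    constructor
    · intro h
      have h0 : (k+1) % (n-1) = 0 := by
        rw [Nat.add_mod, Nat.mod_eq_of_lt (show 1 < n-1 by omega),
          show k % (n-1) = n - 2 by omega, show n-2+1 = n-1 by omega, Nat.mod_self]
      exact ⟨h0, by omega⟩
    · rintro ⟨h, -⟩
      have h1 : (k % (n-1) + 1) % (n-1) = 0 := by
        rw [Nat.add_mod, Nat.mod_eq_of_lt (show 1 < n-1 by omega)] at h
        exact h
      have h2 := Nat.le_of_dvd (by omega) (Nat.dvd_of_mod_eq_zero h1)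
      omega

def Q (n j : ℕ) : Set (List A1) := {x | (j + x.length) % (n-1) = 0 ∧ j + x.length ≠ 0}

lemma leftQuot_L4 (n : ℕ) (hn : 4 ≤ n) (w : List A1) :
    leftQuot (L4 n) w = Q n w.length := by
  ext x
  simp [leftQuot, mem_L4 n hn, Q]

lemma Q_congr (n : ℕ) {j j' : ℕ} (hj : 1 ≤ j) (hj' : 1 ≤ j')
    (h : j % (n-1) = j' % (n-1)) : Q n j = Q n j' := by
  ext x
  simp only [Q, Set.mem_setOf_eq]
  rw [Nat.add_mod j, Nat.add_mod j', h]
  constructor <;> rintro ⟨h1, h2⟩ <;> exact ⟨h1, by omega⟩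

lemma Q_rep (n : ℕ) (hn : 4 ≤ n) {j : ℕ} (hj : 1 ≤ j) :
    Q n j = Q n ((j-1) % (n-1) + 1) := by
  apply Q_congr n hj (by omega)
  conv_lhs => rw [show j = (j-1)+1 by omega]
  rw [Nat.add_mod (j-1) 1, Nat.mod_eq_of_lt (show 1 < n-1 by omega)]

lemma Q_inj (n : ℕ) (hn : 4 ≤ n) {j j' : ℕ} (hj : j ≤ n-1) (hj' : j' ≤ n-1)
    (h : Q n j = Q n j') : j = j' := by
  have hm3 : 3 ≤ n - 1 := by omega
  have hmem : ∀ ℓ : ℕ, ((j + ℓ) % (n-1) = 0 ∧ j + ℓ ≠ 0) ↔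
      ((j' + ℓ) % (n-1) = 0 ∧ j' + ℓ ≠ 0) := by
    intro ℓ
    have := Set.ext_iff.mp h (List.replicate ℓ A1.a)
    simpa [Q] using this
  have h0 := hmem 0
  simp only [Nat.add_zero] at h0
  have h1 : (j' + (2*(n-1) - j)) % (n-1) = 0 ∧ j' + (2*(n-1) - j) ≠ 0 := by
    apply (hmem (2*(n-1) - j)).mp
    constructor
    · rw [show j + (2*(n-1) - j) = (n-1)*2 by omega]
      exact Nat.mul_mod_right (n-1) 2
    · omega
  obtain ⟨c, hc⟩ := Nat.dvd_of_mod_eq_zero h1.1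
  have hc1 : 1 ≤ c := by
    rcases Nat.eq_zero_or_pos c with h'|h'
    · subst h'; simp at hc; omega
    · exact h'
  have hc3 : c ≤ 3 := by
    by_contra h'
    push_neg at h'
    have h4 : (n-1) * 4 ≤ (n-1) * c := Nat.mul_le_mul_left _ (by omega)
    rw [← hc] at h4
    omega
  have hdistinct : ¬ (j = 0 ∧ j' = n-1) ∧ ¬ (j = n-1 ∧ j' = 0) := by
    constructor
    · rintro ⟨e1, e2⟩
      rw [e1, e2, Nat.mod_self] at h0
      simp at h0
      omega
    · rintro ⟨e1, e2⟩
      rw [e1, e2, Nat.mod_self] at h0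
      simp at h0
      omega
  interval_cases c <;> omega

lemma quotients_L4 (n : ℕ) (hn : 4 ≤ n) :
    quotients (L4 n) = Q n '' (Set.Iic (n-1)) := by
  ext S
  simp only [quotients, Set.mem_range, Set.mem_image, Set.mem_Iic]
  constructor
  · rintro ⟨w, rfl⟩
    rw [leftQuot_L4 n hn]
    rcases Nat.eq_zero_or_pos w.length with h|h
    · exact ⟨w.length, by omega, rfl⟩
    · refine ⟨(w.length - 1) % (n-1) + 1, ?_, (Q_rep n hn h).symm⟩
      have := Nat.mod_lt (w.length - 1) (show 0 < n-1 by omega)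
      omega
  · rintro ⟨j, hj, rfl⟩
    exact ⟨List.replicate j A1.a, by rw [leftQuot_L4 n hn, List.length_replicate]⟩

lemma quotients_quot (n : ℕ) (hn : 4 ≤ n) (w : List A1) (hw : w ≠ []) :
    quotients (leftQuot (L4 n) w) = Q n '' (Set.Icc 1 (n-1)) := by
  have hW : 1 ≤ w.length := List.length_pos_iff.mpr hw
  have hquot : ∀ u : List A1, leftQuot (leftQuot (L4 n) w) u = Q n (w.length + u.length) := by
    intro u
    have : leftQuot (leftQuot (L4 n) w) u = leftQuot (L4 n) (w ++ u) := by
      ext x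
      simp [leftQuot, List.append_assoc]
    rw [this, leftQuot_L4 n hn, List.length_append]
  ext S
  simp only [quotients, Set.mem_range, Set.mem_image, Set.mem_Icc]
  constructor
  · rintro ⟨u, rfl⟩
    rw [hquot u]
    refine ⟨(w.length + u.length - 1) % (n-1) + 1, ?_, (Q_rep n hn (by omega)).symm⟩
    have := Nat.mod_lt (w.length + u.length - 1) (show 0 < n-1 by omega)
    omega
  · rintro ⟨j, hj, rfl⟩
    have hle : w.length ≤ (n-1) * w.length :=
      Nat.le_mul_of_pos_left _ (by omega)
    refine ⟨List.replicate (j + (n-1) * w.length - w.length) A1.a, ?_⟩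
    rw [hquot, List.length_replicate,
      show w.length + (j + (n-1) * w.length - w.length) = j + (n-1) * w.length by omega]
    apply Q_congr n (by omega) (by omega)
    exact Nat.add_mul_mod_self_left j (n-1) w.length

end Stmt4Aux

open Stmt4Aux

/-- `L_n(a)` is non-returning of state complexity `n`, and every quotient of it by a
nonempty word has state complexity `n-1`. -/
theorem stmt4 (n : ℕ) (hn : 4 ≤ n) :
    NonReturning (L4 n) ∧ stateComplexity (L4 n) = n ∧
    (∀ w : List A1, w ≠ [] → stateComplexity (leftQuot (L4 n) w) = n - 1) := by
  have hL4 : L4 n = Q n 0 := by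
    ext x
    rw [mem_L4 n hn]
    simp [Q]
  refine ⟨?_, ?_, ?_⟩
  · intro w hw hcontra
    have hW : 1 ≤ w.length := List.length_pos_iff.mpr hw
    rw [leftQuot_L4 n hn, hL4, Q_rep n hn hW] at hcontra
    have := Nat.mod_lt (w.length - 1) (show 0 < n-1 by omega)
    have := Q_inj n hn (show (w.length-1) % (n-1) + 1 ≤ n-1 by omega)
      (show 0 ≤ n-1 by omega) hcontra
    omega
  · have hinj : Set.InjOn (Q n) (Set.Iic (n-1)) :=
      fun a ha b hb hab => Q_inj n hn ha hb hab
    rw [stateComplexity, Nat.card_coe_set_eq, quotients_L4 n hn,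
      Set.ncard_image_of_injOn hinj,
      ← Finset.coe_Iic, Set.ncard_coe_finset, Nat.card_Iic]
    omega
  · intro w hw
    have hinj : Set.InjOn (Q n) (Set.Icc 1 (n-1)) :=
      fun a ha b hb hab => Q_inj n hn ha.2 hb.2 hab
    rw [stateComplexity, Nat.card_coe_set_eq, quotients_quot n hn w hw,
      Set.ncard_image_of_injOn hinj,
      ← Finset.coe_Icc, Set.ncard_coe_finset, Nat.card_Icc]
    omega
end

section
/- Let n ≥ 4. The transition semigroup of D_n over the alphabet Σ_n (equivalently, the syntactic semigroup of L_n(Σ_n)) is exactly the full non-returning semigroup N_n, and hence has cardinality (n-1)^n. -/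
open Function Equiv

theorem genBy.apply_mem {α : Type} {G : Set (α → α)} {P : Set α}
    (hG : ∀ g ∈ G, ∀ q, g q ∈ P) {t : α → α} (ht : genBy G t) (q : α) : t q ∈ P := by
  induction ht generalizing q with
  | base hg => exact hG _ hg q
  | comp _ _ _ iht => exact iht _

theorem eq_univ_of_mul_mem_of_closure_eq_top {G : Type*} [Group G] [Finite G] {S s : Set G}
    (hmul : ∀ a ∈ S, ∀ b ∈ S, a * b ∈ S) (hs : s ⊆ S) (hne : s.Nonempty)
    (htop : Subgroup.closure s = ⊤) : S = Set.univ := by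
  let M : Submonoid G :=
    { carrier := insert 1 S
      one_mem' := Set.mem_insert 1 S
      mul_mem' := by
        rintro a b (rfl | ha) (rfl | hb)
        · simp
        · simpa using Set.mem_insert_of_mem 1 hb
        · simpa using Set.mem_insert_of_mem 1 ha
        · exact Set.mem_insert_of_mem 1 (hmul a ha b hb) }
  have hM : ∀ g : G, g = 1 ∨ g ∈ S := fun g => by
    have : Submonoid.closure s ≤ M := Submonoid.closure_le.mpr (hs.trans (Set.subset_insert 1 S))
    exact this (by rw [← Subgroup.closure_toSubmonoid_of_finite, htop]; trivial)
  have hone : (1 : G) ∈ S := by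
    obtain ⟨a, ha⟩ := hne
    rcases hM a⁻¹ with h | h
    · exact inv_eq_one.mp h ▸ hs ha
    · simpa using hmul a (hs ha) a⁻¹ h
  exact Set.eq_univ_of_forall fun g => (hM g).elim (· ▸ hone) id

theorem Equiv.Perm.exists_apply_eq_and_apply_eq {X : Type*} [DecidableEq X] {x y x' y' : X}
    (hxy : x ≠ y) (hxy' : x' ≠ y') : ∃ σ : Perm X, σ x = x' ∧ σ y = y' := by
  obtain ⟨σ, hσ⟩ := Perm.exists_extending_pair ![x, y] ![x', y']
    (by simp [Injective, Fin.forall_fin_two, hxy, hxy.symm])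
    (by simp [Injective, Fin.forall_fin_two, hxy', hxy'.symm])
  exact ⟨σ, hσ 0, hσ 1⟩

theorem exists_lt_and_apply_eq_of_not_injective {α β : Type*} [LinearOrder α] {f : α → β}
    (hf : ¬Injective f) : ∃ i j, i < j ∧ f i = f j := by
  obtain ⟨a, b, hab, hne⟩ := not_injective_iff.mp hf
  rcases hne.lt_or_gt with h | h
  exacts [⟨a, b, h, hab⟩, ⟨b, a, h, hab.symm⟩]

section FullTransformationMonoid

variable {X : Type*} [Fintype X] [DecidableEq X] {M : Set (X → X)}

theorem update_id_mem_of_injOn_compl (hperm : ∀ σ : Perm X, ⇑σ ∈ M)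
    (hcomp : ∀ u ∈ M, ∀ v ∈ M, v ∘ u ∈ M) {f : X → X} (hf : f ∈ M) {a b : X} (hab : a ≠ b)
    (hfab : f a = f b) (hinj : Set.InjOn f {b}ᶜ) : update id b a ∈ M := by
  obtain ⟨σ, hσ⟩ := Perm.exists_extending_pair (fun z : {z // z ≠ b} => f z) Subtype.val
    (fun z w h => Subtype.ext (hinj z.2 w.2 h)) Subtype.val_injective
  have : ⇑σ ∘ f = update id b a := by
    ext z
    by_cases hz : z = b
    · simpa [hz, ← hfab] using hσ ⟨a, hab⟩
    · simpa [hz] using hσ ⟨z, hz⟩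
  exact this ▸ hcomp f hf σ (hperm σ)

theorem eq_univ_of_perm_mem_of_injOn_compl (hperm : ∀ σ : Perm X, ⇑σ ∈ M)
    (hcomp : ∀ u ∈ M, ∀ v ∈ M, v ∘ u ∈ M) {f : X → X} (hf : f ∈ M) {a b : X} (hab : a ≠ b)
    (hfab : f a = f b) (hinj : Set.InjOn f {b}ᶜ) : M = Set.univ := by
  have hmerge : ∀ x y : X, x ≠ y → update id x y ∈ M := by
    intro x y hxy
    obtain ⟨π, hπx, hπy⟩ := Perm.exists_apply_eq_and_apply_eq hxy hab.symm
    have : ⇑π⁻¹ ∘ update id b a ∘ π = update id x y := by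
      ext z
      by_cases hz : z = x
      · simp [hz, hπx, ← hπy]
      · have : π z ≠ b := hπx ▸ π.injective.ne hz
        simp [hz, this]
    exact this ▸ hcomp _ (hcomp _ (hperm π) _
      (update_id_mem_of_injOn_compl hperm hcomp hf hab hfab hinj)) _ (hperm π⁻¹)
  suffices ∀ k, ∀ u : X → X, (Finset.univ.image u)ᶜ.card = k → u ∈ M from
    Set.eq_univ_of_forall fun u => this _ u rfl
  intro k
  induction k using Nat.strong_induction_on with
  | _ k ih =>
  intro u hk
  by_cases hsurj : Surjective u
  · exact hperm (Equiv.ofBijective u ⟨Finite.injective_iff_surjective.mpr hsurj, hsurj⟩)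
  obtain ⟨w, hw⟩ := not_forall.mp hsurj
  obtain ⟨x, y, huxy, hxy⟩ :=
    not_injective_iff.mp (mt Finite.injective_iff_surjective.mp hsurj)
  -- `u` factors through a merge, after a map that misses fewer points
  have hu : update u x w ∘ update id x y = u := by
    ext z
    by_cases hz : z = x
    · simp [hz, Ne.symm hxy, huxy]
    · simp [hz]
  have hlt : (Finset.univ.image (update u x w))ᶜ.card < k := by
    refine hk ▸ Finset.card_lt_card (Finset.compl_ssubset_compl.mpr ?_)
    refine (Finset.ssubset_iff_of_subset ?_).mpr
      ⟨w, Finset.mem_image.mpr ⟨x, Finset.mem_univ x, by simp⟩, by simpa using hw⟩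
    exact Finset.image_subset_iff.mpr fun z _ =>
      Finset.mem_image.mpr ⟨_, Finset.mem_univ _, congrFun hu z⟩
  exact hu ▸ hcomp _ (hmerge x y hxy) _ (ih _ hlt _ rfl)

end FullTransformationMonoid

theorem factorsThrough_of_card_image_eq_pred {X Y Z : Type*} [Fintype X] [DecidableEq X]
    [DecidableEq Y] {f : X → Y} {g : X → Z} {i j : X} (hij : i ≠ j)
    (hf : (Finset.univ.image f).card = Fintype.card X - 1) (hfij : f i = f j)
    (hgij : g i = g j) : g.FactorsThrough f := by
  have himage : (Finset.univ.erase j).image f = Finset.univ.image f := by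
    rw [← Finset.insert_erase (Finset.mem_univ j), Finset.image_insert,
      Finset.erase_insert_eq_erase,
      Finset.insert_eq_of_mem (hfij ▸ Finset.mem_image_of_mem f (by simpa using hij)),
      Finset.erase_idem]
  have hinj : Set.InjOn f ↑(Finset.univ.erase j) :=
    Finset.injOn_of_card_image_eq <| by
      rw [himage, hf, Finset.card_erase_of_mem (Finset.mem_univ j), Finset.card_univ]
  intro a b hab
  by_cases ha : a = j <;> by_cases hb : b = j
  · rw [ha, hb]
  · rw [ha, ← hgij, hinj (by simpa using hij) (by simpa using hb) (hfij.trans (ha ▸ hab))]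
  · rw [hb, ← hgij, hinj (by simpa using ha) (by simpa using hij) (hab.trans (hb ▸ hfij.symm))]
  · rw [hinj (by simpa using ha) (by simpa using hb) hab]

theorem Nat.card_Nn (n : ℕ) : Nat.card (Nn n) = (n - 1) ^ n := by
  have e : Nn n ≃ (Fin n → {x : Fin n // x.val ≠ 0}) :=
    Equiv.subtypePiEquivPi (p := fun _ (x : Fin n) => x.val ≠ 0)
  rw [Nat.card_congr e, Nat.card_fun]
  rcases n with _ | n
  · simp
  · simp [Fin.val_eq_zero_iff]

def succRestrictions {k : ℕ} (G : Set (Fin (k + 1) → Fin (k + 1))) : Set (Fin k → Fin k) :=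
  {u | ∃ v, genBy G v ∧ v ∘ Fin.succ = Fin.succ ∘ u}

section Restriction

variable {k : ℕ} {G : Set (Fin (k + 1) → Fin (k + 1))}

theorem comp_mem_succRestrictions {u u' : Fin k → Fin k} (hu : u ∈ succRestrictions G)
    (hu' : u' ∈ succRestrictions G) : u' ∘ u ∈ succRestrictions G := by
  obtain ⟨v, hv, hvu⟩ := hu
  obtain ⟨v', hv', hvu'⟩ := hu'
  refine ⟨v' ∘ v, hv.comp hv', ?_⟩
  rw [comp_assoc, hvu, ← comp_assoc, hvu', comp_assoc]

theorem genBy_of_factorsThrough (hall : succRestrictions G = Set.univ)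
    {w t : Fin (k + 1) → Fin (k + 1)} (hw : genBy G w) (hw0 : w ∈ Nn (k + 1))
    (ht0 : t ∈ Nn (k + 1)) (ht : t.FactorsThrough w) : genBy G t := by
  let t' : Fin (k + 1) → Fin k := fun z => (t z).pred (Fin.val_ne_zero_iff.mp (ht0 z))
  have ht' : t'.FactorsThrough w := fun a b h => by simp only [t', ht h]
  -- the default `t'` of `extend` only serves to supply values in `Fin k`
  obtain ⟨v, hv, hvu⟩ : (fun i => extend w t' t' i.succ) ∈ succRestrictions G :=
    hall ▸ Set.mem_univ _
  have hvw : v ∘ w = t := by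
    funext z
    obtain ⟨i, hi⟩ := Fin.exists_succ_eq.mpr (Fin.val_ne_zero_iff.mp (hw0 z))
    have := congrFun hvu i
    simp only [comp_apply, hi, ht'.extend_apply] at this
    simp [this, t']
  exact hvw ▸ hw.comp hv

end Restriction

section Letters

variable {m : ℕ} {G : Set (Fin (m + 4) → Fin (m + 4))}

theorem finRotate_mem_succRestrictions {v : Fin (m + 4) → Fin (m + 4)} (hv : genBy G v)
    (hval : ∀ q, (v q).val = if q.val = m + 4 - 1 then 1 else q.val + 1) :
    ⇑(finRotate (m + 3)) ∈ succRestrictions G := by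
  refine ⟨v, hv, funext fun i => Fin.ext ?_⟩
  simp only [comp_apply, hval, Fin.val_succ, coe_finRotate, Fin.ext_iff, Fin.val_last]
  split_ifs <;> omega

theorem swap_mem_succRestrictions {v : Fin (m + 4) → Fin (m + 4)} (hv : genBy G v)
    (hval : ∀ q, (v q).val =
      if q.val = 0 then 2 else if q.val = 1 then 2 else if q.val = 2 then 1 else q.val) :
    ⇑(swap (0 : Fin (m + 3)) 1) ∈ succRestrictions G := by
  refine ⟨v, hv, funext fun i => Fin.ext ?_⟩
  simp only [comp_apply, hval, Fin.val_succ, swap_apply_def, Fin.ext_iff]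
  split_ifs <;> simp_all

theorem update_finRotate_mem_succRestrictions {v : Fin (m + 4) → Fin (m + 4)} (hv : genBy G v)
    (hval : ∀ q, (v q).val = if q.val = m + 4 - 1 then 2 else q.val + 1) :
    update (⇑(finRotate (m + 3))) (Fin.last _) 1 ∈ succRestrictions G := by
  refine ⟨v, hv, funext fun i => Fin.ext ?_⟩
  rw [comp_apply, hval, Fin.val_succ, comp_apply, Fin.val_succ, update_apply]
  split_ifs with h1 h2 h2
  · simp
  · exact absurd (Fin.ext (by simp; omega)) h2
  · simp_all
  · rw [coe_finRotate_of_ne_last h2]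

theorem succRestrictions_eq_univ (hrot : ⇑(finRotate (m + 3)) ∈ succRestrictions G)
    (hswap : ⇑(swap (0 : Fin (m + 3)) 1) ∈ succRestrictions G)
    (hcollapse : update (⇑(finRotate (m + 3))) (Fin.last _) 1 ∈ succRestrictions G) :
    succRestrictions G = Set.univ := by
  have hperm : ∀ σ : Perm (Fin (m + 3)), ⇑σ ∈ succRestrictions G := by
    have hrot0 : finRotate (m + 3) 0 = 1 := by simp
    refine Set.eq_univ_iff_forall.mp (eq_univ_of_mul_mem_of_closure_eq_top
      (S := {σ : Perm (Fin (m + 3)) | ⇑σ ∈ succRestrictions G})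
      (s := {finRotate _, swap 0 (finRotate _ 0)})
      (fun a ha b hb => by simpa using comp_mem_succRestrictions hb ha) ?_
      (Set.insert_nonempty _ _)
      (Perm.closure_cycle_adjacent_swap (isCycle_finRotate_of_le (by omega))
        (support_finRotate_of_le (by omega)) 0))
    rw [hrot0, Set.insert_subset_iff, Set.singleton_subset_iff]
    exact ⟨hrot, hswap⟩
  refine eq_univ_of_perm_mem_of_injOn_compl hperm
    (fun u hu v hv => comp_mem_succRestrictions hu hv) hcollapse (a := 0) (b := Fin.last _)
    (Fin.ext_iff.not.mpr (by simp)) (by simp) ?_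
  exact (finRotate _).injective.injOn.congr fun x hx => (update_of_ne hx _ _).symm

end Letters

theorem setOf_genBy_eq_Nn {k : ℕ} {G : Set (Fin (k + 1) → Fin (k + 1))} (hG : G ⊆ Nn (k + 1))
    (hall : succRestrictions G = Set.univ)
    (htype : ∀ i j, i < j → ∃ w ∈ G, (Finset.univ.image w).card = k ∧ w i = w j) :
    {t | genBy G t} = Nn (k + 1) := by
  ext t
  refine ⟨fun ht q => genBy.apply_mem (P := {p : Fin (k + 1) | p.val ≠ 0})
    (fun g hg => hG hg) ht q, fun ht => ?_⟩
  have hninj : ¬Injective t := fun hinj => by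
    obtain ⟨z, hz⟩ := Finite.injective_iff_surjective.mp hinj 0
    exact ht z (by simp [hz])
  obtain ⟨i, j, hij, htij⟩ := exists_lt_and_apply_eq_of_not_injective hninj
  obtain ⟨w, hwG, hwrank, hwij⟩ := htype i j hij
  exact genBy_of_factorsThrough hall (.base hwG) (hG hwG) ht
    (factorsThrough_of_card_image_eq_pred hij.ne (by simpa using hwrank) hwij htij)

/-- `δ` assigns to each pair `{i,j}` (a letter of `Σ_n`) the transformation it induces; the
letters of the pairs `{0,n-1}`, `{0,1}`, `{1,n-1}` are `a`, `b`, `c`. -/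
theorem stmt5_general (n : ℕ) (hn : 4 ≤ n)
    (δ : {p : Fin n × Fin n // p.1 < p.2} → Fin n → Fin n)
    (havoid : ∀ x q, (δ x q).val ≠ 0)
    (htype : ∀ x, rank (δ x) = n - 1 ∧ δ x x.val.1 = δ x x.val.2)
    (ha : ∀ x : {p : Fin n × Fin n // p.1 < p.2},
      x.val.1.val = 0 → x.val.2.val = n - 1 →
      ∀ q, (δ x q).val = if q.val = n - 1 then 1 else q.val + 1)
    (hb : ∀ x : {p : Fin n × Fin n // p.1 < p.2},
      x.val.1.val = 0 → x.val.2.val = 1 →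
      ∀ q, (δ x q).val =
        if q.val = 0 then 2 else if q.val = 1 then 2 else if q.val = 2 then 1 else q.val)
    (hc : ∀ x : {p : Fin n × Fin n // p.1 < p.2},
      x.val.1.val = 1 → x.val.2.val = n - 1 →
      ∀ q, (δ x q).val = if q.val = n - 1 then 2 else q.val + 1) :
    {t | genBy (Set.range δ) t} = Nn n ∧
    Nat.card {t | genBy (Set.range δ) t} = (n - 1) ^ n := by
  obtain ⟨m, rfl⟩ : ∃ m, n = m + 4 := ⟨n - 4, by omega⟩
  have hall : succRestrictions (Set.range δ) = Set.univ :=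
    succRestrictions_eq_univ
      (finRotate_mem_succRestrictions (.base ⟨_, rfl⟩)
        (ha ⟨(⟨0, by omega⟩, ⟨m + 3, by omega⟩), Fin.mk_lt_mk.mpr (by omega)⟩ rfl rfl))
      (swap_mem_succRestrictions (.base ⟨_, rfl⟩)
        (hb ⟨(⟨0, by omega⟩, ⟨1, by omega⟩), Fin.mk_lt_mk.mpr (by omega)⟩ rfl rfl))
      (update_finRotate_mem_succRestrictions (.base ⟨_, rfl⟩)
        (hc ⟨(⟨1, by omega⟩, ⟨m + 3, by omega⟩), Fin.mk_lt_mk.mpr (by omega)⟩ rfl rfl))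
  have hgen : {t | genBy (Set.range δ) t} = Nn (m + 4) :=
    setOf_genBy_eq_Nn (by rintro _ ⟨x, rfl⟩; exact havoid x) hall fun i j hij =>
      ⟨δ ⟨(i, j), hij⟩, ⟨_, rfl⟩, by simpa [rank] using (htype _).1, (htype _).2⟩
  exact ⟨hgen, hgen ▸ Nat.card_Nn _⟩

/-- The alphabet `Σ_n` of `D_n`: one letter for each pair `{i,j} ⊆ Q_n` with `i < j`.
`δ` assigns to each letter the transformation of `Q_n` it induces: each letter of pair
`{i,j}` induces a transformation of type `{i,j}` whose image avoids `0`, with the letters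
of the pairs `{0,n-1}`, `{0,1}`, `{1,n-1}`, `{0,2}` inducing respectively
`a : (1,…,n-1)(0→1)`, `b : (1,2)(0→2)`, `c : (2,…,n-1)(1→2)(0→1)`, `d : (0→2)`.
The transition semigroup of `D_n` (equivalently the syntactic semigroup of `L_n(Σ_n)`)
is exactly `N_n`, of cardinality `(n-1)^n`. -/
theorem stmt5 (n : ℕ) (hn : 4 ≤ n)
    (δ : {p : Fin n × Fin n // p.1 < p.2} → Fin n → Fin n)
    (havoid : ∀ x q, (δ x q).val ≠ 0)
    (htype : ∀ x, rank (δ x) = n - 1 ∧ δ x x.val.1 = δ x x.val.2)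
    (ha : ∀ x : {p : Fin n × Fin n // p.1 < p.2},
      x.val.1.val = 0 → x.val.2.val = n - 1 →
      ∀ q, (δ x q).val = if q.val = n - 1 then 1 else q.val + 1)
    (hb : ∀ x : {p : Fin n × Fin n // p.1 < p.2},
      x.val.1.val = 0 → x.val.2.val = 1 →
      ∀ q, (δ x q).val =
        if q.val = 0 then 2 else if q.val = 1 then 2 else if q.val = 2 then 1 else q.val)
    (hc : ∀ x : {p : Fin n × Fin n // p.1 < p.2},
      x.val.1.val = 1 → x.val.2.val = n - 1 →
      ∀ q, (δ x q).val = if q.val = n - 1 then 2 else q.val + 1)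
    (hd : ∀ x : {p : Fin n × Fin n // p.1 < p.2},
      x.val.1.val = 0 → x.val.2.val = 2 →
      ∀ q, (δ x q).val = if q.val = 0 then 2 else q.val) :
    {t | genBy (Set.range δ) t} = Nn n ∧
    Nat.card {t | genBy (Set.range δ) t} = (n - 1) ^ n :=
  stmt5_general n hn δ havoid htype ha hb hc
end

section
/- Let n ≥ 4. For every subset S ⊆ Q_n, the atomic intersection A_S of the language L_n(a,b,c) is nonempty; hence L_n(a,b,c) has exactly 2^n atoms. -/
/-- The three-letter alphabet `{a,b,c}`. -/
inductive ABC : Type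
  | a | b | c
  deriving DecidableEq

/-- The transitions of `D_n` on the letters `a,b,c` (states `{0,…,n-1}` embedded in `ℕ`;
only these states are reachable):
`a : (1,…,n-1)(0→1)`, `b : (1,2)(0→2)`, `c : (2,…,n-1)(1→2)(0→1)`. -/
def stepABC (n : ℕ) (q : ℕ) : ABC → ℕ
  | ABC.a => if q = n - 1 then 1 else q + 1
  | ABC.b => if q = 0 then 2 else if q = 1 then 2 else if q = 2 then 1 else q
  | ABC.c => if q = n - 1 then 2 else q + 1

/-- The DFA `D_n` over `{a,b,c}`, with initial state `0` and final state `n-1`. -/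
def DnABC (n : ℕ) : DFA ABC ℕ := ⟨stepABC n, 0, {n - 1}⟩

/-- `K_q`, the left quotient of `L_n(a,b,c)` corresponding to state `q` of `D_n`:
the set of words accepted starting from `q`. -/
def Kq (n : ℕ) (q : Fin n) : Set (List ABC) :=
  {w | (DnABC n).evalFrom q.val w ∈ (DnABC n).accept}

/-- The atomic intersection `A_S = ⋂_{i∈S} K_i ∩ ⋂_{i∉S} K_iᶜ`. -/
def atomInt (n : ℕ) (S : Set (Fin n)) : Set (List ABC) :=
  {w | ∀ i : Fin n, (i ∈ S → w ∈ Kq n i) ∧ (i ∉ S → w ∉ Kq n i)}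

namespace Stmt6Aux

/-- Action of a word on a state. -/
def act (n : ℕ) (w : List ABC) (q : ℕ) : ℕ := w.foldl (stepABC n) q

lemma act_append (n : ℕ) (w v : List ABC) (q : ℕ) :
    act n (w ++ v) q = act n v (act n w q) := List.foldl_append

lemma act_cons (n : ℕ) (x : ABC) (w : List ABC) (q : ℕ) :
    act n (x :: w) q = act n w (stepABC n q x) := rfl

lemma act_nil (n : ℕ) (q : ℕ) : act n [] q = q := rfl

/-- Block gadget: `true` protects the top state, `false` trashes it into the parked bin `1`. -/
def blk : Bool → List ABC
  | true => [ABC.a, ABC.b]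
  | false => [ABC.c, ABC.b]

lemma act_blk (n : ℕ) (hn : 4 ≤ n) (t : Bool) (p : ℕ) (h1 : 1 ≤ p) (h2 : p ≤ n - 1) :
    act n (blk t) p =
      if p = 1 then 1 else if p = n - 1 then (if t then 2 else 1) else p + 1 := by
  cases t <;>
  · simp only [blk, act_cons, act_nil, stepABC]
    split_ifs <;> first | exact absurd ‹False› id | omega

/-- `j` blocks, the `k`-th chosen by `f k`. -/
def blocksW (f : ℕ → Bool) : ℕ → List ABC
  | 0 => []
  | j + 1 => blocksW f j ++ blk (f (j + 1))

lemma act_blocksW (n : ℕ) (hn : 4 ≤ n) (f : ℕ → Bool) (j : ℕ) (hj : j ≤ n - 2) (p : ℕ)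
    (h1 : 1 ≤ p) (h2 : p ≤ n - 1) :
    act n (blocksW f j) p =
      if p = 1 then 1
      else if j + p ≤ n - 1 then p + j
      else if f (n - p) then p + j - (n - 2) else 1 := by
  induction j with
  | zero =>
    simp only [blocksW, act_nil]
    split_ifs <;> first | exact absurd ‹False› id | omega
  | succ j ih =>
    have hj' : j ≤ n - 2 := by omega
    rw [blocksW, act_append, ih hj']
    set v := if p = 1 then 1 else if j + p ≤ n - 1 then p + j
      else if f (n - p) then p + j - (n - 2) else 1 with hv
    have hb1 : 1 ≤ v := by
      rw [hv]; split_ifs <;> first | exact absurd ‹False› id | omega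
    have hb2 : v ≤ n - 1 := by
      rw [hv]; split_ifs <;> first | exact absurd ‹False› id | omega
    rw [act_blk n hn _ v hb1 hb2]
    by_cases hp1 : p = 1
    · have hv' : v = 1 := by rw [hv, if_pos hp1]
      rw [hv', if_pos rfl, if_pos hp1]
    · rw [if_neg hp1]
      by_cases hle : j + 1 + p ≤ n - 1
      · have hv' : v = p + j := by rw [hv, if_neg hp1, if_pos (by omega)]
        rw [hv', if_neg (show ¬ (p + j = 1) by omega),
          if_neg (show ¬ (p + j = n - 1) by omega), if_pos hle]
        omega
      · by_cases hle2 : j + p ≤ n - 1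
        · have hv' : v = n - 1 := by rw [hv, if_neg hp1, if_pos hle2]; omega
          rw [hv', if_neg (by omega), if_pos rfl, if_neg hle]
          have hnp : n - p = j + 1 := by omega
          rw [hnp]
          cases f (j + 1) <;> simp <;> omega
        · rw [if_neg hle]
          cases hf : f (n - p)
          · have hv' : v = 1 := by rw [hv, if_neg hp1, if_neg hle2, hf]; simp
            rw [hv', if_pos rfl]
            simp
          · have hv' : v = p + j - (n - 2) := by
              rw [hv, if_neg hp1, if_neg hle2, hf]; simp
            rw [hv', if_neg (show ¬ (p + j - (n - 2) = 1) by omega),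
              if_neg (show ¬ (p + j - (n - 2) = n - 1) by omega)]
            simp
            omega

lemma act_replicate_a (n : ℕ) (k v : ℕ) (h1 : 1 ≤ v) (h2 : v + k ≤ n - 1) :
    act n (List.replicate k ABC.a) v = v + k := by
  induction k generalizing v with
  | zero => simp [act_nil]
  | succ k ih =>
    rw [List.replicate_succ, act_cons]
    have : stepABC n v ABC.a = v + 1 := by
      simp only [stepABC]; rw [if_neg (by omega)]
    rw [this, ih (v + 1) (by omega) (by omega)]
    omega

lemma phase1 (n : ℕ) (hn : 4 ≤ n) (T : ℕ → Bool) (p : ℕ) (h1 : 1 ≤ p) (h2 : p ≤ n - 1) :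
    act n (blocksW (fun k => T (n - k)) (n - 2)) p =
      if p = 1 then 1 else if T p then p else 1 := by
  have hnp : n - (n - p) = p := by omega
  rw [act_blocksW n hn _ (n - 2) le_rfl p h1 h2]
  by_cases hp1 : p = 1
  · rw [if_pos hp1, if_pos hp1]
  · rw [if_neg hp1, if_neg hp1, if_neg (show ¬ (n - 2 + p ≤ n - 1) by omega)]
    show (if T (n - (n - p)) = true then p + (n - 2) - (n - 2) else 1) = _
    rw [hnp]
    cases T p <;> simp <;> omega

lemma phase2 (n : ℕ) (hn : 4 ≤ n) (T : ℕ → Bool) (p : ℕ) (h1 : 1 ≤ p) (h2 : p ≤ n - 1) :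
    act n (blocksW (fun k => !T (n - k) || decide (n - k = 2)) (n - 2)) p =
      if p = 1 then 1 else if !T p || decide (p = 2) then p else 1 := by
  have hnp : n - (n - p) = p := by omega
  rw [act_blocksW n hn _ (n - 2) le_rfl p h1 h2]
  by_cases hp1 : p = 1
  · rw [if_pos hp1, if_pos hp1]
  · rw [if_neg hp1, if_neg hp1, if_neg (show ¬ (n - 2 + p ≤ n - 1) by omega)]
    show (if (!T (n - (n - p)) || decide (n - (n - p) = 2)) = true
        then p + (n - 2) - (n - 2) else 1) = _
    rw [hnp]
    cases (!T p || decide (p = 2)) <;> simp <;> omega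

/-- The machine word: sends position `p ∈ {1,…,n-1}` to `n-1` if `T p`, else to `n-2`,
provided `T 1 = false`. -/
def machine (n : ℕ) (T : ℕ → Bool) : List ABC :=
  blocksW (fun k => T (n - k)) (n - 2) ++
    (ABC.b :: (blocksW (fun k => !T (n - k) || decide (n - k = 2)) (n - 2) ++
      (ABC.b :: List.replicate (n - 3) ABC.a)))

lemma act_machine (n : ℕ) (hn : 4 ≤ n) (T : ℕ → Bool) (hT1 : T 1 = false) (p : ℕ)
    (h1 : 1 ≤ p) (h2 : p ≤ n - 1) :
    act n (machine n T) p = if T p then n - 1 else n - 2 := by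
  have hTp2 : T p = true → 2 ≤ p := by
    intro h
    rcases Nat.lt_or_ge p 2 with hlt | hge
    · have : p = 1 := by omega
      rw [this, hT1] at h
      exact absurd h (by simp)
    · exact hge
  rw [machine, act_append, phase1 n hn T p h1 h2]
  set u := if p = 1 then 1 else if T p then p else 1 with hu
  have hu' : u = if T p then p else 1 := by
    rw [hu]
    by_cases hp1 : p = 1
    · rw [if_pos hp1, hp1, hT1]; simp
    · rw [if_neg hp1]
  rw [act_cons]
  have hstep1 : stepABC n u ABC.b = if T p then (if p = 2 then 1 else p) else 2 := by
    rw [hu']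
    cases hTp : T p
    · simp [stepABC]
    · have h2p : 2 ≤ p := hTp2 hTp
      simp only [stepABC]
      split_ifs <;> first | exact absurd ‹False› id | omega
  rw [hstep1, act_append]
  have hval1 : 1 ≤ (if T p then (if p = 2 then 1 else p) else 2) := by
    split_ifs <;> omega
  have hval2 : (if T p then (if p = 2 then 1 else p) else 2) ≤ n - 1 := by
    split_ifs <;> omega
  rw [phase2 n hn T _ hval1 hval2]
  have hv2 : (if (if T p then (if p = 2 then 1 else p) else 2) = 1 then 1
      else if !T (if T p then (if p = 2 then 1 else p) else 2)
          || decide ((if T p then (if p = 2 then 1 else p) else 2) = 2)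
        then (if T p then (if p = 2 then 1 else p) else 2) else 1)
      = if T p then 1 else 2 := by
    cases hTp : T p
    · simp
    · have h2p : 2 ≤ p := hTp2 hTp
      by_cases hp2 : p = 2
      · subst hp2; simp
      · have hp1' : ¬ p = 1 := by omega
        simp [hp2, hp1', hTp]
  rw [hv2, act_cons]
  have hstep2 : stepABC n (if T p then 1 else 2) ABC.b = if T p then 2 else 1 := by
    cases T p <;> simp [stepABC]
  rw [hstep2]
  cases T p
  · norm_num
    rw [act_replicate_a n (n - 3) 1 le_rfl (by omega)]
    omega
  · norm_num
    rw [act_replicate_a n (n - 3) 2 (by omega) (by omega)]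
    omega

/-- Realization: if a letter `ℓ` moves all states into `{1,…,n-1}` compatibly with the
desired membership function, then some word accepts exactly from the desired states. -/
lemma realize (n : ℕ) (hn : 4 ≤ n) (ℓ : ABC) (inS S' : ℕ → Bool)
    (hstep : ∀ q, q < n → S' (stepABC n q ℓ) = inS q ∧ 1 ≤ stepABC n q ℓ ∧
      stepABC n q ℓ ≤ n - 1) :
    ∃ w : List ABC, ∀ q, q < n → (act n w q = n - 1 ↔ inS q = true) := by
  have hstep_a_top : act n [ABC.a] (n - 1) = 1 := by
    show stepABC n (n - 1) ABC.a = 1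
    simp [stepABC]
  have hstep_a_sub : act n [ABC.a] (n - 2) = n - 1 := by
    show stepABC n (n - 2) ABC.a = n - 1
    simp only [stepABC]
    rw [if_neg (by omega)]
    omega
  cases hS1 : S' 1
  · refine ⟨ℓ :: machine n S', fun q hq => ?_⟩
    obtain ⟨h1, h2, h3⟩ := hstep q hq
    rw [act_cons, act_machine n hn S' hS1 _ h2 h3, h1]
    cases inS q <;> simp <;> omega
  · refine ⟨ℓ :: (machine n (fun p => !S' p && !decide (p = 1)) ++ [ABC.a]),
      fun q hq => ?_⟩
    obtain ⟨h1, h2, h3⟩ := hstep q hq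
    rw [act_cons, act_append, act_machine n hn _ (by simp) _ h2 h3]
    beta_reduce
    by_cases hq1 : stepABC n q ℓ = 1
    · have hin : inS q = true := by rw [← h1, hq1, hS1]
      rw [if_neg (by simp [hq1]), hstep_a_sub, hin]
      simp
    · cases hin : inS q
      · rw [if_pos (by simp [hq1, h1, hin]), hstep_a_top]
        simp
        omega
      · rw [if_neg (by simp [h1, hin]), hstep_a_sub]
        simp

open Classical in
/-- Main combinatorial lemma: every membership pattern is realized by some word. -/
lemma exists_word (n : ℕ) (hn : 4 ≤ n) (S : Set (Fin n)) :
    ∃ w : List ABC, ∀ i : Fin n, (w ∈ Kq n i ↔ i ∈ S) := by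
  classical
  set inS : ℕ → Bool := fun q => if h : q < n then decide ((⟨q, h⟩ : Fin n) ∈ S) else false
    with hinS
  have key : ∃ w : List ABC, ∀ q, q < n → (act n w q = n - 1 ↔ inS q = true) := by
    by_cases hA : inS 0 = inS (n - 1)
    · -- first letter a
      refine realize n hn ABC.a inS
        (fun p => if p = 1 then inS 0 else inS (p - 1)) (fun q hq => ?_)
      by_cases hqt : q = n - 1
      · have e : stepABC n q ABC.a = 1 := by simp [stepABC, hqt]
        rw [e]; beta_reduce
        rw [if_pos rfl]
        exact ⟨by rw [hqt]; exact hA, by omega, by omega⟩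
      · have e : stepABC n q ABC.a = q + 1 := by simp [stepABC, hqt]
        rw [e]; beta_reduce
        refine ⟨?_, by omega, by omega⟩
        by_cases h0 : q = 0
        · rw [if_pos (by omega), h0]
        · rw [if_neg (by omega)]
          simp
    · by_cases hB : inS 0 = inS 1
      · -- first letter b
        refine realize n hn ABC.b inS
          (fun p => if p = 1 then inS 2 else if p = 2 then inS 0 else inS p)
          (fun q hq => ?_)
        by_cases h0 : q = 0
        · have e : stepABC n q ABC.b = 2 := by simp [stepABC, h0]
          rw [e]; beta_reduce
          rw [if_neg (by omega), if_pos rfl, h0]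
          exact ⟨rfl, by omega, by omega⟩
        · by_cases h1 : q = 1
          · have e : stepABC n q ABC.b = 2 := by simp [stepABC, h1]
            rw [e]; beta_reduce
            rw [if_neg (by omega), if_pos rfl, h1]
            exact ⟨hB, by omega, by omega⟩
          · by_cases h2 : q = 2
            · have e : stepABC n q ABC.b = 1 := by simp [stepABC, h2]
              rw [e]; beta_reduce
              rw [if_pos rfl, h2]
              exact ⟨rfl, by omega, by omega⟩
            · have e : stepABC n q ABC.b = q := by
                simp only [stepABC]
                rw [if_neg h0, if_neg h1, if_neg h2]
              rw [e]; beta_reduce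
              rw [if_neg h1, if_neg h2]
              exact ⟨rfl, by omega, by omega⟩
      · -- first letter c
        have hC : inS 1 = inS (n - 1) := by
          revert hA hB
          cases inS 0 <;> cases inS 1 <;> cases inS (n - 1) <;> simp
        refine realize n hn ABC.c inS
          (fun p => if p = 1 then inS 0 else if p = 2 then inS 1 else inS (p - 1))
          (fun q hq => ?_)
        by_cases hqt : q = n - 1
        · have e : stepABC n q ABC.c = 2 := by simp [stepABC, hqt]
          rw [e]; beta_reduce
          rw [if_neg (by omega), if_pos rfl, hqt]
          exact ⟨hC, by omega, by omega⟩
        · have e : stepABC n q ABC.c = q + 1 := by simp [stepABC, hqt]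
          rw [e]; beta_reduce
          refine ⟨?_, by omega, by omega⟩
          by_cases h0 : q = 0
          · rw [if_pos (by omega), h0]
          · by_cases h1 : q = 1
            · rw [if_neg (by omega), if_pos (by omega), h1]
            · rw [if_neg (by omega), if_neg (by omega)]
              simp
  obtain ⟨w, hw⟩ := key
  refine ⟨w, fun i => ?_⟩
  have := hw i.val i.isLt
  have hK : w ∈ Kq n i ↔ act n w i.val = n - 1 := by
    simp only [Kq, DnABC, DFA.mem_accepts]
    rfl
  rw [hK, this, hinS]
  simp only [dif_pos i.isLt]
  simp

end Stmt6Aux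

/-- Every atomic intersection of `L_n(a,b,c)` is nonempty; hence `L_n(a,b,c)` has
exactly `2^n` atoms. -/
theorem stmt6 (n : ℕ) (hn : 4 ≤ n) :
    (∀ S : Set (Fin n), (atomInt n S).Nonempty) ∧
    Nat.card {A : Set (List ABC) | ∃ S : Set (Fin n), A = atomInt n S ∧ A.Nonempty}
      = 2 ^ n := by
  classical
  have hne : ∀ S : Set (Fin n), (atomInt n S).Nonempty := by
    intro S
    obtain ⟨w, hw⟩ := Stmt6Aux.exists_word n hn S
    exact ⟨w, fun i => ⟨fun hi => (hw i).mpr hi, fun hi hK => hi ((hw i).mp hK)⟩⟩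
  refine ⟨hne, ?_⟩
  have hinj : Function.Injective (atomInt n) := by
    intro S S' h
    obtain ⟨w, hw⟩ := hne S
    have hw' : w ∈ atomInt n S' := h ▸ hw
    ext i
    constructor
    · intro hi
      by_contra hi'
      exact (hw' i).2 hi' ((hw i).1 hi)
    · intro hi
      by_contra hi'
      exact (hw i).2 hi' ((hw' i).1 hi)
  have hset : {A : Set (List ABC) | ∃ S : Set (Fin n), A = atomInt n S ∧ A.Nonempty}
      = Set.range (atomInt n) := by
    ext A
    simp only [Set.mem_setOf_eq, Set.mem_range]
    constructor
    · rintro ⟨S, rfl, -⟩; exact ⟨S, rfl⟩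
    · rintro ⟨S, rfl⟩; exact ⟨S, rfl, hne S⟩
  rw [hset, Nat.card_range_of_injective hinj]
  have : Nat.card (Set (Fin n)) = Nat.card (Fin n → Bool) :=
    Nat.card_congr (Equiv.arrowCongr (Equiv.refl _) Equiv.propEquivBool)
  rw [this, Nat.card_eq_fintype_card, Fintype.card_fun]
  simp
end

section
/- Let n ≥ 4. The reversal (L_n(a,b,c))^R = { reverse of w : w ∈ L_n(a,b,c) } has state complexity exactly 2^n; moreover no non-returning language of state complexity n over a two-letter alphabet has a reversal of state complexity 2^n. -/
/-- The language `L_n(a,b,c)` accepted by `D_n`. -/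
def LnABC (n : ℕ) : Set (List ABC) := (DnABC n).accepts

/-- The reversal of a language. -/
def rev {α : Type} (L : Set (List α)) : Set (List α) := List.reverse '' L

namespace S8
open ABC Equiv Equiv.Perm

def ev (n : ℕ) (q : ℕ) (v : List ABC) : ℕ := v.foldl (stepABC n) q

lemma ev_cons (n q : ℕ) (x : ABC) (v : List ABC) : ev n q (x :: v) = ev n (stepABC n q x) v := rfl

lemma ev_append (n q : ℕ) (v w : List ABC) : ev n q (v ++ w) = ev n (ev n q v) w :=
  List.foldl_append ..

lemma step_mem (k q : ℕ) (hq : q < k + 4) (x : ABC) :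
    1 ≤ stepABC (k+4) q x ∧ stepABC (k+4) q x < k + 4 := by
  cases x <;> simp only [stepABC] <;> split_ifs <;> omega

lemma ev_mem (k q : ℕ) (hq : q < k + 4) (v : List ABC) :
    ev (k+4) q v < k + 4 := by
  induction v generalizing q with
  | nil => exact hq
  | cons x v ih => rw [ev_cons]; exact ih _ (step_mem k q hq x).2

lemma ev_replicate_a (k : ℕ) (j q : ℕ) (h : q + j ≤ k + 3) :
    ev (k+4) q (List.replicate j ABC.a) = q + j := by
  induction j generalizing q with
  | zero => rfl
  | succ j ih =>
    rw [List.replicate_succ, ev_cons]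
    have hs : stepABC (k+4) q ABC.a = q + 1 := by
      simp only [stepABC]; split_ifs with h' <;> omega
    rw [hs, ih (q+1) (by omega)]; omega

lemma ev_replicate_c (k : ℕ) (j q : ℕ) (h2 : 2 ≤ q) (h3 : q ≤ k + 3) :
    ev (k+4) q (List.replicate j ABC.c) = 2 + ((q - 2 + j) % (k + 2)) := by
  induction j generalizing q with
  | zero => simp [ev]; rw [Nat.mod_eq_of_lt (by omega)]; omega
  | succ j ih =>
    rw [List.replicate_succ, ev_cons]
    by_cases hq : q = k + 3
    · have hs : stepABC (k+4) q ABC.c = 2 := by simp only [stepABC]; split_ifs with h' <;> omega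
      rw [hs, ih 2 (by omega) (by omega)]
      subst hq
      have e1 : (2 - 2 + j) % (k+2) = j % (k+2) := by norm_num
      have e2 : (k + 3 - 2 + (j+1)) % (k+2) = j % (k+2) := by
        rw [show k + 3 - 2 + (j+1) = k + 2 + j from by omega, Nat.add_mod_left]
      rw [e1, e2]
    · have hs : stepABC (k+4) q ABC.c = q + 1 := by simp only [stepABC]; split_ifs with h' <;> omega
      rw [hs, ih (q+1) (by omega) (by omega)]
      congr 2
      omega

lemma ev_one_replicate_c (k : ℕ) :
    ev (k+4) 1 (List.replicate (k+2) ABC.c) = k + 3 := by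
  rw [List.replicate_succ, ev_cons]
  have hs : stepABC (k+4) 1 ABC.c = 2 := by simp only [stepABC]; split_ifs with h' <;> omega
  rw [hs, ev_replicate_c k (k+1) 2 le_rfl (by omega), Nat.mod_eq_of_lt (by omega)]
  omega

/-- word `v` acts on states `{1,…,k+3}` (indexed by `Fin (k+3)`, state = index+1) as `f`. -/
def acts (k : ℕ) (v : List ABC) (f : Fin (k+3) → Fin (k+3)) : Prop :=
  ∀ i : Fin (k+3), ev (k+4) ((i : ℕ) + 1) v = (f i : ℕ) + 1

lemma acts_nil (k : ℕ) : acts k [] id := fun _ => rfl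

lemma acts_append {k : ℕ} {v w : List ABC} {f g : Fin (k+3) → Fin (k+3)}
    (hv : acts k v f) (hw : acts k w g) : acts k (v ++ w) (g ∘ f) := by
  intro i
  rw [ev_append, hv i, hw (f i)]
  rfl

lemma acts_a (k : ℕ) : acts k [ABC.a] ⇑(finRotate (k+3)) := by
  intro i
  have : ev (k+4) ((i:ℕ)+1) [ABC.a] = stepABC (k+4) ((i:ℕ)+1) ABC.a := rfl
  rw [this, finRotate_succ_apply]
  rcases i with ⟨iv, hi⟩
  simp only [stepABC, Fin.add_def, Fin.val_one]
  split_ifs with h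
  · have : iv = k + 2 := by omega
    subst this
    simp [Nat.mod_self]
  · have : iv < k + 2 := by omega
    rw [Nat.mod_eq_of_lt (by omega)]

lemma acts_b (k : ℕ) : acts k [ABC.b] ⇑(Equiv.swap (0 : Fin (k+3)) 1) := by
  intro i
  have he : ev (k+4) ((i:ℕ)+1) [ABC.b] = stepABC (k+4) ((i:ℕ)+1) ABC.b := rfl
  rw [he]
  have h0 : ((0 : Fin (k+3)) : ℕ) = 0 := rfl
  have h1 : ((1 : Fin (k+3)) : ℕ) = 1 := rfl
  rcases eq_or_ne i 0 with rfl | hi0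
  · rw [Equiv.swap_apply_left]
    simp [stepABC, h0, h1]
  rcases eq_or_ne i 1 with rfl | hi1
  · rw [Equiv.swap_apply_right]
    simp [stepABC, h0, h1]
  · rw [Equiv.swap_apply_of_ne_of_ne hi0 hi1]
    have v0 : (i : ℕ) ≠ 0 := fun h => hi0 (Fin.ext h)
    have v1 : (i : ℕ) ≠ 1 := fun h => hi1 (Fin.ext (by rw [h, h1]))
    have : stepABC (k+4) ((i:ℕ)+1) ABC.b = (i:ℕ) + 1 := by
      simp only [stepABC]
      rw [if_neg (fun h => by omega), if_neg (fun h => v0 (by omega)), if_neg (fun h => v1 (by omega))]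
    rw [this]

lemma acts_mu (k : ℕ) :
    acts k (List.replicate (k+2) ABC.c) (fun i => if i = 0 then Fin.last (k+2) else i) := by
  intro i
  rcases eq_or_ne i 0 with rfl | hi0
  · simpa using ev_one_replicate_c k
  · have v0 : 1 ≤ (i : ℕ) := by
      rcases Nat.eq_zero_or_pos (i : ℕ) with h | h
      · exact absurd (Fin.ext h) hi0
      · omega
    rw [ev_replicate_c k (k+2) ((i:ℕ)+1) (by omega) (by omega)]
    simp only [if_neg hi0]
    have : ((i:ℕ) + 1 - 2 + (k+2)) % (k+2) = (i:ℕ) - 1 := by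
      rw [show (i:ℕ) + 1 - 2 + (k+2) = k + 2 + ((i:ℕ) - 1) from by omega, Nat.add_mod_left,
        Nat.mod_eq_of_lt (by omega)]
    rw [this]
    omega

lemma acts_pow {k : ℕ} {v : List ABC} {π : Perm (Fin (k+3))} (hv : acts k v ⇑π) :
    ∀ j : ℕ, ∃ w, acts k w ⇑(π ^ j) := by
  intro j
  induction j with
  | zero => exact ⟨[], by simpa using acts_nil k⟩
  | succ j ih =>
    obtain ⟨w, hw⟩ := ih
    refine ⟨v ++ w, ?_⟩
    have := acts_append hv hw
    have hfun : ⇑(π ^ (j+1)) = ⇑(π ^ j) ∘ ⇑π := by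
      funext x
      rw [pow_succ]
      rfl
    rwa [hfun]

def H (k : ℕ) : Subgroup (Perm (Fin (k+3))) where
  carrier := {π | ∃ v, acts k v ⇑π}
  one_mem' := ⟨[], by simpa using acts_nil k⟩
  mul_mem' := by
    rintro π ρ ⟨v, hv⟩ ⟨w, hw⟩
    refine ⟨w ++ v, ?_⟩
    have := acts_append hw hv
    have hfun : ⇑(π * ρ) = ⇑π ∘ ⇑ρ := rfl
    rwa [hfun]
  inv_mem' := by
    rintro π ⟨v, hv⟩
    obtain ⟨w, hw⟩ := acts_pow hv (orderOf π - 1)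
    refine ⟨w, ?_⟩
    have h1 : orderOf π ≠ 0 := (orderOf_pos π).ne'
    have hinv : π⁻¹ = π ^ (orderOf π - 1) := by
      rw [eq_comm, eq_inv_iff_mul_eq_one, ← pow_succ,
        show orderOf π - 1 + 1 = orderOf π from by omega, pow_orderOf_eq_one]
    rwa [hinv]

lemma perm_realizable (k : ℕ) (π : Perm (Fin (k+3))) : ∃ v, acts k v ⇑π := by
  have hcl : Subgroup.closure ({finRotate (k+3), Equiv.swap 0 (finRotate (k+3) 0)} :
      Set (Perm (Fin (k+3)))) = ⊤ :=
    Equiv.Perm.closure_cycle_adjacent_swap isCycle_finRotate support_finRotate 0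
  have hsub : Subgroup.closure ({finRotate (k+3), Equiv.swap 0 (finRotate (k+3) 0)} :
      Set (Perm (Fin (k+3)))) ≤ H k := by
    rw [Subgroup.closure_le]
    rintro ρ (rfl | rfl)
    · exact ⟨[ABC.a], acts_a k⟩
    · have : finRotate (k+3) 0 = 1 := by rw [finRotate_succ_apply, zero_add]
      rw [this]
      exact ⟨[ABC.b], acts_b k⟩
  have : π ∈ H k := hsub (hcl ▸ Subgroup.mem_top π)
  exact this

lemma exists_merge (k : ℕ) (x y : Fin (k+3)) (hxy : x ≠ y) :
    ∃ v, acts k v (fun i => if i = x then y else i) := by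
  have hlast0 : (Fin.last (k+2)) ≠ (0 : Fin (k+3)) := by
    intro h
    have := congrArg Fin.val h
    simp [Fin.last] at this
  set s1 := Equiv.swap x (0 : Fin (k+3)) with hs1
  have hy' : s1 y ≠ 0 := by
    intro h
    have : s1 y = s1 x := by rw [h, hs1, Equiv.swap_apply_left]
    exact hxy.symm (s1.injective this)
  set π := (Equiv.swap (s1 y) (Fin.last (k+2))) * s1 with hπ
  have hπx : π x = 0 := by
    rw [hπ, Perm.mul_apply, hs1, Equiv.swap_apply_left]
    exact Equiv.swap_apply_of_ne_of_ne (Ne.symm hy') (Ne.symm hlast0)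
  have hπy : π y = Fin.last (k+2) := by
    rw [hπ, Perm.mul_apply, Equiv.swap_apply_left]
  obtain ⟨vp, hvp⟩ := perm_realizable k π
  obtain ⟨vq, hvq⟩ := perm_realizable k π⁻¹
  refine ⟨vp ++ (List.replicate (k+2) ABC.c ++ vq), ?_⟩
  have h1 := acts_append hvp (acts_append (acts_mu k) hvq)
  have hfun : (⇑π⁻¹ ∘ (fun i => if i = 0 then Fin.last (k+2) else i)) ∘ ⇑π
      = (fun i => if i = x then y else i) := by
    funext i
    rcases eq_or_ne i x with rfl | hix
    · simp [hπx, ← hπy]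
    · have hne : π i ≠ 0 := by
        rw [← hπx]
        exact fun h => hix (π.injective h)
      simp [if_neg hne, if_neg hix]
  rwa [hfun] at h1

lemma exists_gU (k : ℕ) (U : Finset (Fin (k+3))) :
    ∃ f : Fin (k+3) → Fin (k+3), (∃ v, acts k v f) ∧
      ∀ i, (f i = Fin.last (k+2) ↔ i ∈ U) := by
  have hlast0 : (Fin.last (k+2)) ≠ (0 : Fin (k+3)) := by
    intro h
    have := congrArg Fin.val h
    simp [Fin.last] at this
  induction U using Finset.strongInduction with
  | _ U ih =>
    rcases Nat.lt_or_ge U.card 2 with hc | hc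
    · rcases Nat.lt_or_ge U.card 1 with hc0 | hc1
      · -- empty
        have hU : U = ∅ := Finset.card_eq_zero.mp (by omega)
        refine ⟨fun i => if i = Fin.last (k+2) then 0 else i,
          exists_merge k _ _ hlast0, fun i => ?_⟩
        subst hU
        simp only [Finset.notMem_empty, iff_false]
        split_ifs with h
        · exact Ne.symm hlast0
        · exact h
      · -- singleton
        have : U.card = 1 := by omega
        obtain ⟨u, hu⟩ := Finset.card_eq_one.mp this
        subst hu
        refine ⟨⇑(Equiv.swap u (Fin.last (k+2))), perm_realizable k _, fun i => ?_⟩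
        simp only [Finset.mem_singleton]
        constructor
        · intro h
          have : Equiv.swap u (Fin.last (k+2)) i = Equiv.swap u (Fin.last (k+2)) u := by
            rw [h, Equiv.swap_apply_left]
          exact (Equiv.swap u (Fin.last (k+2))).injective this
        · rintro rfl
          exact Equiv.swap_apply_left _ _
    · -- card ≥ 2
      obtain ⟨u, hu, u', hu', huu'⟩ := Finset.one_lt_card.mp hc
      obtain ⟨g, ⟨w, hw⟩, hg⟩ := ih (U.erase u) (Finset.erase_ssubset hu)
      obtain ⟨vm, hvm⟩ := exists_merge k u u' huu'
      refine ⟨g ∘ (fun i => if i = u then u' else i), ⟨vm ++ w, acts_append hvm hw⟩, fun i => ?_⟩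
      rcases eq_or_ne i u with rfl | hiu
      · simp only [Function.comp_apply]
        rw [if_pos trivial, hg u', Finset.mem_erase]
        simp [hu, hu', Ne.symm huu']
      · simp only [Function.comp_apply]
        rw [if_neg hiu, hg i, Finset.mem_erase]
        simp [hiu]

lemma reach_of_letter (k : ℕ) (T : Set ℕ) (x : ABC) (P : Fin (k+3) → Prop) [DecidablePred P]
    (hP : ∀ q, q < k + 4 → ∀ _h1 : 1 ≤ stepABC (k+4) q x, ∀ _h2 : stepABC (k+4) q x < k+4,
       (P ⟨stepABC (k+4) q x - 1, by omega⟩ ↔ q ∈ T)) :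
    ∃ v, ∀ q, q < k+4 → (ev (k+4) q v = k+3 ↔ q ∈ T) := by
  obtain ⟨f, ⟨w, hw⟩, hf⟩ := exists_gU k (Finset.univ.filter P)
  refine ⟨x :: w, fun q hq => ?_⟩
  obtain ⟨h1, h2⟩ := step_mem k q hq x
  set s := stepABC (k+4) q x with hs
  set i : Fin (k+3) := ⟨s - 1, by omega⟩ with hi
  have hsv : s = (i : ℕ) + 1 := by rw [hi]; simp; omega
  rw [ev_cons, ← hs, hsv, hw i]
  have hlast : ((f i : ℕ) + 1 = k + 3) ↔ f i = Fin.last (k+2) := by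
    constructor
    · intro h
      exact Fin.ext (by simpa using (by omega : (f i : ℕ) = k + 2))
    · intro h
      rw [h]
      rfl
  rw [hlast, hf i, Finset.mem_filter]
  have := hP q hq h1 h2
  rw [hi]
  simp only [Finset.mem_univ, true_and]
  exact this

lemma reach (k : ℕ) (T : Set ℕ) :
    ∃ v : List ABC, ∀ q, q < k + 4 → (ev (k+4) q v = k + 3 ∧ q < k + 4 ↔ q ∈ T ∧ q < k + 4) := by
  classical
  have main : ∃ v, ∀ q, q < k+4 → (ev (k+4) q v = k+3 ↔ q ∈ T) := by
    by_cases hac : ((0:ℕ) ∈ T ↔ (k+3:ℕ) ∈ T)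
    · -- letter a
      refine reach_of_letter k T ABC.a (fun i => (i : ℕ) ∈ T) ?_
      intro q hq h1 h2
      by_cases hq3 : q = k + 3
      · have hstep : stepABC (k+4) q ABC.a = 1 := by
          simp only [stepABC]; rw [if_pos (by omega)]
        subst hq3
        simp only [hstep]
        norm_num
        exact hac
      · have hstep : stepABC (k+4) q ABC.a = q + 1 := by
          simp only [stepABC]; rw [if_neg (by omega)]
        simp only [hstep]
        norm_num
    · by_cases hbc : ((1:ℕ) ∈ T ↔ (k+3:ℕ) ∈ T)
      · -- letter c
        refine reach_of_letter k T ABC.c (fun i => (i : ℕ) ∈ T) ?_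
        intro q hq h1 h2
        by_cases hq3 : q = k + 3
        · have hstep : stepABC (k+4) q ABC.c = 2 := by
            simp only [stepABC]; rw [if_pos (by omega)]
          subst hq3
          simp only [hstep]
          norm_num
          exact hbc
        · have hstep : stepABC (k+4) q ABC.c = q + 1 := by
            simp only [stepABC]; rw [if_neg (by omega)]
          simp only [hstep]
          norm_num
      · -- letter b; here 0 ∈ T ↔ 1 ∈ T by pigeonhole
        have hab : ((0:ℕ) ∈ T ↔ (1:ℕ) ∈ T) := by tauto
        refine reach_of_letter k T ABC.b
          (fun i => if (i : ℕ) = 0 then (2:ℕ) ∈ T else if (i:ℕ) = 1 then (0:ℕ) ∈ T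
            else ((i:ℕ) + 1) ∈ T) ?_
        intro q hq h1 h2
        have hscases : q = 0 ∨ q = 1 ∨ q = 2 ∨ (3 ≤ q ∧ q < k + 4) := by omega
        rcases hscases with rfl | rfl | rfl | ⟨hq3, hq4⟩
        · have hstep : stepABC (k+4) 0 ABC.b = 2 := by norm_num [stepABC]
          simp only [hstep]
          norm_num
        · have hstep : stepABC (k+4) 1 ABC.b = 2 := by norm_num [stepABC]
          simp only [hstep]
          norm_num
          exact hab
        · have hstep : stepABC (k+4) 2 ABC.b = 1 := by norm_num [stepABC]
          simp only [hstep]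
          norm_num
        · have hstep : stepABC (k+4) q ABC.b = q := by
            simp only [stepABC]
            rw [if_neg (by omega), if_neg (by omega), if_neg (by omega)]
          simp only [hstep]
          rw [if_neg (by omega), if_neg (by omega)]
          have : q - 1 + 1 = q := by omega
          rw [this]
  obtain ⟨v, hv⟩ := main
  exact ⟨v, fun q hq => by rw [hv q hq]⟩


-- ### Part 1: counting

lemma mem_rev {α : Type} (L : Set (List α)) (x : List α) : x ∈ rev L ↔ x.reverse ∈ L := by
  constructor
  · rintro ⟨y, hy, rfl⟩
    simpa using hy
  · intro h
    exact ⟨x.reverse, h, by simp⟩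

lemma mem_Ln (k : ℕ) (w : List ABC) : w ∈ LnABC (k+4) ↔ ev (k+4) 0 w = k + 3 := by
  have : w ∈ LnABC (k+4) ↔ (DnABC (k+4)).evalFrom 0 w ∈ ({k+4-1} : Set ℕ) := Iff.rfl
  rw [this]
  simp only [Set.mem_singleton_iff]
  rfl

lemma leftQuot_rev (k : ℕ) (w : List ABC) :
    leftQuot (rev (LnABC (k+4))) w
      = {x | ev (k+4) (ev (k+4) 0 x.reverse) w.reverse = k + 3} := by
  ext x
  show w ++ x ∈ rev (LnABC (k+4)) ↔ _
  rw [mem_rev, mem_Ln, List.reverse_append, ev_append]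
  exact Iff.rfl

/-- the subset-indexed quotient languages -/
def FF (k : ℕ) (S : Set (Fin (k+4))) : Set (List ABC) :=
  {x | ∃ i ∈ S, ev (k+4) 0 x.reverse = (i : ℕ)}

lemma ev_replicate_a' (k : ℕ) (j : ℕ) (h : j ≤ k + 3) :
    ev (k+4) 0 (List.replicate j ABC.a) = j := by
  have := ev_replicate_a k j 0 (by omega)
  simpa using this

lemma FF_injective (k : ℕ) : Function.Injective (FF k) := by
  intro S S' h
  ext i
  have key : ∀ (S S' : Set (Fin (k+4))), FF k S = FF k S' → i ∈ S → i ∈ S' := by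
    intro S S' h hi
    have hx : (List.replicate (i:ℕ) ABC.a) ∈ FF k S := by
      refine ⟨i, hi, ?_⟩
      rw [List.reverse_replicate]
      exact ev_replicate_a' k _ (by omega)
    rw [h] at hx
    obtain ⟨j, hj, hev⟩ := hx
    rw [List.reverse_replicate, ev_replicate_a' k _ (by omega)] at hev
    have : j = i := Fin.ext hev.symm
    rwa [this] at hj
  exact ⟨key S S' h, key S' S h.symm⟩

lemma quotients_rev_eq (k : ℕ) :
    quotients (rev (LnABC (k+4))) = Set.range (FF k) := by
  ext M
  constructor
  · rintro ⟨w, rfl⟩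
    refine ⟨{i : Fin (k+4) | ev (k+4) (i : ℕ) w.reverse = k + 3}, ?_⟩
    rw [leftQuot_rev]
    ext x
    have hlt : ev (k+4) 0 x.reverse < k + 4 := ev_mem k 0 (by omega) _
    constructor
    · rintro ⟨i, hi, hev⟩
      show ev (k+4) (ev (k+4) 0 x.reverse) w.reverse = k + 3
      rw [hev]
      exact hi
    · intro hx
      exact ⟨⟨_, hlt⟩, hx, rfl⟩
  · rintro ⟨S, rfl⟩
    obtain ⟨v, hv⟩ := reach k {q | ∃ i ∈ S, (i : ℕ) = q}
    refine ⟨v.reverse, ?_⟩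
    rw [leftQuot_rev]
    ext x
    have hlt : ev (k+4) 0 x.reverse < k + 4 := ev_mem k 0 (by omega) _
    rw [List.reverse_reverse]
    have h2 := hv (ev (k+4) 0 x.reverse) hlt
    constructor
    · intro hx
      obtain ⟨⟨i, hi, hev⟩, -⟩ := h2.mp ⟨hx, hlt⟩
      exact ⟨i, hi, hev.symm⟩
    · rintro ⟨i, hi, hev⟩
      show ev (k+4) (ev (k+4) 0 x.reverse) v = k + 3
      exact (h2.mpr ⟨⟨i, hi, hev.symm⟩, hlt⟩).1

lemma card_set_fin (k : ℕ) : Nat.card (Set (Fin (k+4))) = 2 ^ (k+4) := by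
  have h1 : Nat.card ((Fin (k+4)) → Prop) = Nat.card Prop ^ Nat.card (Fin (k+4)) := Nat.card_fun
  rw [show Set (Fin (k+4)) = ((Fin (k+4)) → Prop) from rfl, h1,
    Nat.card_congr Equiv.propEquivBool]
  simp [Nat.card_eq_fintype_card]

lemma part1 (k : ℕ) : stateComplexity (rev (LnABC (k+4))) = 2 ^ (k+4) := by
  show Nat.card (quotients (rev (LnABC (k+4)))) = 2 ^ (k+4)
  rw [quotients_rev_eq k]
  rw [Nat.card_range_of_injective (FF_injective k)]
  exact card_set_fin k

-- ### Part 2: binary non-returning languages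

section Part2

variable {β : Type}

lemma leftQuot_nil (L : Set (List β)) : leftQuot L [] = L := rfl

lemma leftQuot_leftQuot (L : Set (List β)) (w u : List β) :
    leftQuot (leftQuot L w) u = leftQuot L (w ++ u) := by
  ext x
  show w ++ (u ++ x) ∈ L ↔ (w ++ u) ++ x ∈ L
  rw [List.append_assoc]

lemma card_set (γ : Type) [Finite γ] : Nat.card (Set γ) = 2 ^ Nat.card γ := by
  have h1 : Nat.card (γ → Prop) = Nat.card Prop ^ Nat.card γ := Nat.card_fun
  rw [show Set γ = (γ → Prop) from rfl, h1, Nat.card_congr Equiv.propEquivBool]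
  simp [Nat.card_eq_fintype_card]

lemma mem_lq_rev (L : Set (List β)) (w x : List β) :
    x ∈ leftQuot (rev L) w ↔ w.reverse ∈ leftQuot L x.reverse := by
  show w ++ x ∈ rev L ↔ x.reverse ++ w.reverse ∈ L
  rw [mem_rev, List.reverse_append]

lemma part2 (n : ℕ) (hn : 4 ≤ n) (β : Type) (hβ : Nat.card β = 2) (L : Set (List β))
    (hNR : NonReturning L) (hsc : stateComplexity L = n) :
    stateComplexity (rev L) ≠ 2 ^ n := by
  classical
  set Q : Set (Set (List β)) := quotients L with hQ
  have hQL : L ∈ Q := ⟨[], leftQuot_nil L⟩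
  have hQn : Nat.card ↥Q = n := hsc
  have hQfin : Q.Finite := by
    rw [Set.finite_coe_iff.symm]
    exact Nat.finite_of_card_ne_zero (by rw [hQn]; omega)
  have memQ_quot : ∀ K ∈ Q, ∀ u : List β, leftQuot K u ∈ Q := by
    rintro K ⟨y, rfl⟩ u
    exact ⟨y ++ u, (leftQuot_leftQuot L y u).symm⟩
  -- the "subset" languages
  set T' : List β → Set (Set (List β)) := fun u => {K | K ∈ Q ∧ u ∈ K} with hT'
  set Θ : Set (List β) → Set (Set (List β)) :=
    fun M => {K | K ∈ Q ∧ ∀ y, K = leftQuot L y → y.reverse ∈ M} with hΘ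
  have hkey : ∀ w, Θ (leftQuot (rev L) w) = T' w.reverse := by
    intro w
    ext K
    constructor
    · rintro ⟨hKQ, hall⟩
      obtain ⟨y, rfl⟩ := hKQ
      have := hall y rfl
      rw [mem_lq_rev, List.reverse_reverse] at this
      exact ⟨⟨y, rfl⟩, this⟩
    · rintro ⟨hKQ, hw⟩
      refine ⟨hKQ, fun y hy => ?_⟩
      rw [mem_lq_rev, List.reverse_reverse, ← hy]
      exact hw
  have hinj2 : ∀ w w', T' w.reverse = T' w'.reverse →
      leftQuot (rev L) w = leftQuot (rev L) w' := by
    intro w w' h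
    ext x
    rw [mem_lq_rev, mem_lq_rev]
    have hx : leftQuot L x.reverse ∈ Q := ⟨x.reverse, rfl⟩
    have h1 : w.reverse ∈ leftQuot L x.reverse ↔ leftQuot L x.reverse ∈ T' w.reverse :=
      ⟨fun hh => ⟨hx, hh⟩, fun hh => hh.2⟩
    have h2 : w'.reverse ∈ leftQuot L x.reverse ↔ leftQuot L x.reverse ∈ T' w'.reverse :=
      ⟨fun hh => ⟨hx, hh⟩, fun hh => hh.2⟩
    rw [h1, h2, h]
  have hΘinj : Set.InjOn Θ (quotients (rev L)) := by
    rintro M ⟨w, rfl⟩ M' ⟨w', rfl⟩ h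
    rw [hkey, hkey] at h
    exact hinj2 w w' h
  have hΘimg : Θ '' (quotients (rev L)) = Set.range T' := by
    ext S
    constructor
    · rintro ⟨M, ⟨w, rfl⟩, rfl⟩
      exact ⟨w.reverse, (hkey w).symm⟩
    · rintro ⟨u, rfl⟩
      refine ⟨leftQuot (rev L) u.reverse, ⟨u.reverse, rfl⟩, ?_⟩
      rw [hkey, List.reverse_reverse]
  have hcard : stateComplexity (rev L) = (Set.range T').ncard := by
    show Nat.card ↥(quotients (rev L)) = _
    rw [Nat.card_coe_set_eq, ← Set.ncard_image_of_injOn hΘinj, hΘimg]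
  -- two letters
  obtain ⟨x₀, x₁, hx01, hcover⟩ := Nat.card_eq_two_iff.mp hβ
  have hcov : ∀ z : β, z = x₀ ∨ z = x₁ := by
    intro z
    have : z ∈ ({x₀, x₁} : Set β) := by rw [hcover]; trivial
    simpa using this
  set Ψ : β → Set (Set (List β)) → Set (Set (List β)) :=
    fun x S => {K | K ∈ Q ∧ leftQuot K [x] ∈ S} with hΨ
  have hcons : ∀ (x : β) (u : List β), T' (x :: u) = Ψ x (T' u) := by
    intro x u
    ext K
    constructor
    · rintro ⟨hKQ, hm⟩
      exact ⟨hKQ, memQ_quot K hKQ [x], hm⟩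
    · rintro ⟨hKQ, -, hm⟩
      exact ⟨hKQ, hm⟩
  have hsubset : Set.range T' ⊆
      insert (T' []) (Set.range (Ψ x₀) ∪ Set.range (Ψ x₁)) := by
    rintro S ⟨u, rfl⟩
    cases u with
    | nil => exact Set.mem_insert _ _
    | cons x u =>
      refine Set.mem_insert_of_mem _ ?_
      rw [hcons]
      rcases hcov x with rfl | rfl
      · exact Or.inl ⟨T' u, rfl⟩
      · exact Or.inr ⟨T' u, rfl⟩
  -- cardinality bound for each Ψ-range
  have hQLfin : (Q \ {L}).Finite := hQfin.diff
  have hPSfin : {P : Set (Set (List β)) | P ⊆ Q \ {L}}.Finite :=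
    Set.Finite.finite_subsets hQLfin
  have hPScard : {P : Set (Set (List β)) | P ⊆ Q \ {L}}.ncard = 2 ^ (n - 1) := by
    rw [← Nat.card_coe_set_eq]
    have e : ↥{P : Set (Set (List β)) | P ⊆ Q \ {L}} ≃ Set ↥(Q \ {L}) :=
      Equiv.Set.powerset (Q \ {L})
    rw [Nat.card_congr e]
    haveI : Finite ↥(Q \ {L}) := Set.finite_coe_iff.mpr hQLfin
    rw [card_set]
    congr 1
    rw [Nat.card_coe_set_eq, Set.ncard_diff_singleton_of_mem hQL,
      ← hQn, Nat.card_coe_set_eq]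
  have hΨbound : ∀ x : β, (Set.range (Ψ x)).Finite ∧ (Set.range (Ψ x)).ncard ≤ 2 ^ (n-1) := by
    intro x
    set ρ : Set (Set (List β)) → Set (Set (List β)) :=
      fun W => (fun K => leftQuot K [x]) '' W with hρ
    have hΨρ : ∀ S, Ψ x (ρ (Ψ x S)) = Ψ x S := by
      intro S
      ext K
      constructor
      · rintro ⟨hKQ, K', ⟨hK'Q, hK'S⟩, heq⟩
        exact ⟨hKQ, heq ▸ hK'S⟩
      · rintro ⟨hKQ, hS⟩
        exact ⟨hKQ, K, ⟨hKQ, hS⟩, rfl⟩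
    have hρinj : Set.InjOn ρ (Set.range (Ψ x)) := by
      rintro W ⟨S, rfl⟩ W' ⟨S', rfl⟩ h
      rw [← hΨρ S, ← hΨρ S', h]
    have hρsub : ρ '' (Set.range (Ψ x)) ⊆ {P : Set (Set (List β)) | P ⊆ Q \ {L}} := by
      rintro P ⟨W, ⟨S, rfl⟩, rfl⟩
      rintro K' ⟨K, ⟨hKQ, -⟩, rfl⟩
      obtain ⟨y, rfl⟩ := hKQ
      show leftQuot (leftQuot L y) [x] ∈ Q \ {L}
      rw [leftQuot_leftQuot]
      refine ⟨⟨y ++ [x], rfl⟩, ?_⟩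
      simp only [Set.mem_singleton_iff]
      exact hNR (y ++ [x]) (by simp)
    have himgfin : (ρ '' (Set.range (Ψ x))).Finite := hPSfin.subset hρsub
    have hfin : (Set.range (Ψ x)).Finite := Set.Finite.of_finite_image himgfin hρinj
    refine ⟨hfin, ?_⟩
    rw [← Set.ncard_image_of_injOn hρinj]
    rw [← hPScard]
    exact Set.ncard_le_ncard hρsub hPSfin
  -- shared elements
  have hemp : ∀ x : β, (∅ : Set (Set (List β))) ∈ Set.range (Ψ x) := by
    intro x
    refine ⟨∅, ?_⟩
    ext K
    simp [hΨ]
  have hfull : ∀ x : β, {K | K ∈ Q} ∈ Set.range (Ψ x) := by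
    intro x
    refine ⟨Set.univ, ?_⟩
    ext K
    simp [hΨ]
  have hne2 : (∅ : Set (Set (List β))) ≠ {K | K ∈ Q} := by
    intro h
    have : L ∈ ({K | K ∈ Q} : Set (Set (List β))) := hQL
    rw [← h] at this
    exact this
  obtain ⟨hfin0, hb0⟩ := hΨbound x₀
  obtain ⟨hfin1, hb1⟩ := hΨbound x₁
  -- union bound
  have hpairsub : ({∅, {K | K ∈ Q}} : Set (Set (Set (List β)))) ⊆ Set.range (Ψ x₁) := by
    rintro P (rfl | rfl)
    · exact hemp x₁
    · exact hfull x₁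
  have hdiffsub : Set.range (Ψ x₁) \ Set.range (Ψ x₀) ⊆
      Set.range (Ψ x₁) \ ({∅, {K | K ∈ Q}} : Set (Set (Set (List β)))) := by
    rintro P ⟨hP1, hP0⟩
    refine ⟨hP1, ?_⟩
    rintro (rfl | rfl)
    · exact hP0 (hemp x₀)
    · exact hP0 (hfull x₀)
  have hd : (Set.range (Ψ x₁) \ ({∅, {K | K ∈ Q}} : Set (Set (Set (List β))))).ncard
      = (Set.range (Ψ x₁)).ncard - 2 := by
    rw [Set.ncard_diff hpairsub (by exact (Set.finite_singleton _).insert _),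
      Set.ncard_pair hne2]
  have hsplit : Set.range (Ψ x₀) ∪ Set.range (Ψ x₁) =
      Set.range (Ψ x₀) ∪ (Set.range (Ψ x₁) \ Set.range (Ψ x₀)) := by
    rw [Set.union_diff_self]
  have hub : (Set.range (Ψ x₀) ∪ Set.range (Ψ x₁)).ncard ≤ 2^(n-1) + (2^(n-1) - 2) := by
    rw [hsplit]
    refine le_trans (Set.ncard_union_le _ _) ?_
    have h1 : (Set.range (Ψ x₁) \ Set.range (Ψ x₀)).ncard ≤ 2^(n-1) - 2 := by
      refine le_trans (Set.ncard_le_ncard hdiffsub (hfin1.diff)) ?_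
      rw [hd]
      omega
    omega
  have hfinU : (insert (T' []) (Set.range (Ψ x₀) ∪ Set.range (Ψ x₁))).Finite :=
    (hfin0.union hfin1).insert _
  have hfinal : (Set.range T').ncard ≤ 2^(n-1) + (2^(n-1) - 2) + 1 := by
    refine le_trans (Set.ncard_le_ncard hsubset hfinU) ?_
    refine le_trans (Set.ncard_insert_le _ _) ?_
    omega
  rw [hcard]
  have hpow : 2 ^ n = 2 ^ (n-1) + 2 ^ (n-1) := by
    conv_lhs => rw [show n = n - 1 + 1 from by omega]
    rw [pow_succ]
    ring
  have h2 : (2:ℕ) ≤ 2 ^ (n-1) := by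
    calc (2:ℕ) = 2 ^ 1 := by norm_num
    _ ≤ 2 ^ (n-1) := Nat.pow_le_pow_right (by norm_num) (by omega)
  omega

end Part2

end S8

/-- The reversal of `L_n(a,b,c)` has state complexity `2^n`, and no non-returning
language of state complexity `n` over a two-letter alphabet has a reversal of state
complexity `2^n`. -/
theorem stmt8 (n : ℕ) (hn : 4 ≤ n) :
    stateComplexity (rev (LnABC n)) = 2 ^ n ∧
    (∀ (β : Type), Nat.card β = 2 → ∀ L : Set (List β),
      NonReturning L → stateComplexity L = n → stateComplexity (rev L) ≠ 2 ^ n) := by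
  obtain ⟨k, rfl⟩ : ∃ k, n = k + 4 := ⟨n - 4, by omega⟩
  exact ⟨S8.part1 k, fun β hβ L hNR hsc => S8.part2 (k+4) (by omega) β hβ L hNR hsc⟩
end

section
/- Let n ≥ 4. The Kleene star (L_n(a,b))^* of the language L_n(a,b) has state complexity exactly 2^{n-1}. -/
/-- The two-letter alphabet `{a,b}`. -/
inductive AB : Type
  | a | b
  deriving DecidableEq

/-- The transitions of `D_n` on `a,b` (states `{0,…,n-1}` embedded in `ℕ`):
`a : (1,…,n-1)(0→1)`, `b : (1,2)(0→2)`. -/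
def stepAB (n : ℕ) (q : ℕ) : AB → ℕ
  | AB.a => if q = n - 1 then 1 else q + 1
  | AB.b => if q = 0 then 2 else if q = 1 then 2 else if q = 2 then 1 else q

/-- The DFA `D_n` over `{a,b}`, initial state `0`, final state `n-1`. -/
def DnAB (n : ℕ) : DFA AB ℕ := ⟨stepAB n, 0, {n - 1}⟩

/-- The language `L_n(a,b)` accepted by `D_n` over `{a,b}`. -/
def LnAB (n : ℕ) : Language AB := (DnAB n).accepts

/-!
A left quotient of `L∗` by a nonempty word is `⋃_{q ∈ S} L_q L∗`, where `S` is the set of active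
states of `D_n` in the subset construction for the star, which restarts at the initial state `0`
whenever the final state is active. After the first letter `S` avoids `0`; identifying
`{1, …, n-1}` with `ZMod (n-1)` (final state `n-1 ↦ 0`), `a` acts on `S` as the rotation
`z ↦ z + 1` and `b` as the transposition `(1 2)`, together with the restart `0 · b = 2` when `0`
is active. Rotations and `b` produce every nonempty subset (induction on the size, then on the
distance between two elements, which conjugated transpositions shorten). The words `a^j`,
`j < n - 1`, separate these `2^(n-1) - 1` quotients, and `ε` or `b` separates each from `L∗`.
-/

open scoped Computability

namespace Language

variable {α : Type*}

theorem cons_mem_mul {A B : Language α} {c : α} {x : List α} :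
    c :: x ∈ A * B ↔ x ∈ A.leftQuotient [c] * B ∨ [] ∈ A ∧ c :: x ∈ B := by
  simp only [mem_mul, mem_leftQuotient]
  constructor
  · rintro ⟨_ | ⟨c', u⟩, hu, v, hv, huv⟩
    · exact .inr ⟨hu, by simpa [← huv] using hv⟩
    · obtain ⟨rfl, rfl⟩ := List.cons_eq_cons.1 huv
      exact .inl ⟨u, hu, v, hv, rfl⟩
  · rintro (⟨u, hu, v, hv, rfl⟩ | ⟨hA, hB⟩)
    · exact ⟨c :: u, hu, v, hv, rfl⟩
    · exact ⟨[], hA, c :: x, hB, rfl⟩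

theorem cons_mem_kstar {L : Language α} {c : α} {x : List α} :
    c :: x ∈ L∗ ↔ x ∈ L.leftQuotient [c] * L∗ := by
  rw [mem_kstar_iff_exists_nonempty]
  constructor
  · rintro ⟨_ | ⟨_ | ⟨c', u⟩, S⟩, hx, hS⟩
    · simp at hx
    · simp at hS
    · obtain ⟨rfl, rfl⟩ := List.cons_eq_cons.1 hx
      exact ⟨u, (hS _ List.mem_cons_self).1, S.flatten,
        join_mem_kstar fun y hy => (hS y (List.mem_cons_of_mem _ hy)).1, rfl⟩
  · rintro ⟨u, hu, v, hv, rfl⟩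
    obtain ⟨S, rfl, hS⟩ := mem_kstar_iff_exists_nonempty.1 hv
    refine ⟨(c :: u) :: S, rfl, ?_⟩
    simpa [List.forall_mem_cons] using ⟨hu, hS⟩

theorem replicate_mem_mul {A B : Language α} {c : α} {j : ℕ} :
    List.replicate j c ∈ A * B ↔
      ∃ i ≤ j, List.replicate i c ∈ A ∧ List.replicate (j - i) c ∈ B := by
  simp only [mem_mul, List.append_eq_replicate_iff]
  constructor
  · rintro ⟨u, hu, v, hv, hlen, hu', hv'⟩
    refine ⟨u.length, by omega, hu' ▸ hu, ?_⟩
    rwa [← hlen, Nat.add_sub_cancel_left, ← hv']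
  · rintro ⟨i, hi, hA, hB⟩
    exact ⟨_, hA, _, hB, by simp; omega, by simp, by simp⟩

theorem range_leftQuotient_subset {L : Language α} {S : Set (Language α)}
    (hL : L ∈ S) (hS : ∀ K ∈ S, ∀ c, K.leftQuotient [c] ∈ S) : Set.range L.leftQuotient ⊆ S := by
  rintro _ ⟨w, rfl⟩
  induction w using List.reverseRecOn with
  | nil => exact hL
  | append_singleton w c ih => rw [leftQuotient_append]; exact hS _ ih c

theorem leftQuotient_mem_range_leftQuotient {L K : Language α}
    (hK : K ∈ Set.range L.leftQuotient) (c : α) :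
    K.leftQuotient [c] ∈ Set.range L.leftQuotient := by
  obtain ⟨w, rfl⟩ := hK
  exact ⟨w ++ [c], leftQuotient_append L w [c]⟩

end Language

namespace DFA

variable {α σ : Type*} (M : DFA α σ)

def kstarFrom (S : Set σ) : Language α :=
  {x | ∃ q ∈ S, x ∈ M.acceptsFrom q * M.accepts∗}

variable {M} in
theorem mem_kstarFrom {S : Set σ} {x : List α} :
    x ∈ M.kstarFrom S ↔ ∃ q ∈ S, x ∈ M.acceptsFrom q * M.accepts∗ :=
  Iff.rfl

theorem leftQuotient_acceptsFrom (q : σ) (c : α) :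
    (M.acceptsFrom q).leftQuotient [c] = M.acceptsFrom (M.step q c) :=
  rfl

theorem leftQuotient_kstar_accepts (c : α) :
    M.accepts∗.leftQuotient [c] = M.kstarFrom {M.step M.start c} := by
  ext x
  rw [Language.mem_leftQuotient, List.singleton_append, Language.cons_mem_kstar, mem_kstarFrom,
    accepts, leftQuotient_acceptsFrom]
  simp only [Set.mem_singleton_iff, exists_eq_left]

theorem leftQuotient_kstarFrom (S : Set σ) (c : α) :
    (M.kstarFrom S).leftQuotient [c] =
      M.kstarFrom ((M.step · c) '' S ∪ {p | p = M.step M.start c ∧ ∃ q ∈ S, q ∈ M.accept}) := by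
  ext x
  rw [Language.mem_leftQuotient, List.singleton_append, mem_kstarFrom, mem_kstarFrom]
  simp only [Language.cons_mem_mul, Language.cons_mem_kstar, leftQuotient_acceptsFrom,
    Set.mem_union, Set.mem_image, Set.mem_ofPred_eq]
  constructor
  · rintro ⟨q, hq, hx | ⟨hF, hx⟩⟩
    · exact ⟨_, .inl ⟨q, hq, rfl⟩, hx⟩
    · exact ⟨_, .inr ⟨rfl, q, hq, hF⟩, hx⟩
  · rintro ⟨_, ⟨q, hq, rfl⟩ | ⟨rfl, q, hq, hF⟩, hx⟩
    · exact ⟨q, hq, .inl hx⟩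
    · exact ⟨q, hq, .inr ⟨hF, hx⟩⟩

end DFA

theorem stateComplexity_eq_card_range_leftQuotient {α : Type} (L : Language α) :
    stateComplexity L = Nat.card (Set.range L.leftQuotient) :=
  rfl

namespace KleeneStarDn

variable {m : ℕ}

theorem natCast_ne_zero_of_lt {k : ℕ} (hk : k ≠ 0) (hkm : k < m) : (k : ZMod m) ≠ 0 := by
  rw [Ne, ZMod.natCast_eq_zero_iff]
  exact fun h => hk (Nat.eq_zero_of_dvd_of_lt h hkm)

theorem one_ne_zero_of_three_le (hm : 3 ≤ m) : (1 : ZMod m) ≠ 0 := by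
  exact_mod_cast natCast_ne_zero_of_lt (m := m) one_ne_zero (by omega)

theorem two_ne_zero_of_three_le (hm : 3 ≤ m) : (2 : ZMod m) ≠ 0 := by
  exact_mod_cast natCast_ne_zero_of_lt (m := m) two_ne_zero (by omega)

def rotate (c : ZMod m) (T : Finset (ZMod m)) : Finset (ZMod m) :=
  T.map (Equiv.addRight c).toEmbedding

def swapRestart (T : Finset (ZMod m)) : Finset (ZMod m) :=
  if (0 : ZMod m) ∈ T then insert 2 (T.map (Equiv.swap 1 2).toEmbedding)
  else T.map (Equiv.swap 1 2).toEmbedding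

theorem mem_rotate {c y : ZMod m} {T : Finset (ZMod m)} : y ∈ rotate c T ↔ y - c ∈ T := by
  simp [rotate, Finset.mem_map_equiv, sub_eq_add_neg]

theorem rotate_zero (T : Finset (ZMod m)) : rotate 0 T = T := by
  ext y
  rw [mem_rotate, sub_zero]

theorem card_rotate (c : ZMod m) (T : Finset (ZMod m)) : (rotate c T).card = T.card :=
  Finset.card_map _

theorem rotate_singleton (c z : ZMod m) : rotate c {z} = {z + c} := rfl

theorem map_swap_map_swap (a b : ZMod m) (T : Finset (ZMod m)) :
    (T.map (Equiv.swap a b).toEmbedding).map (Equiv.swap a b).toEmbedding = T := by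
  ext y
  simp [Finset.mem_map_equiv]

theorem swap_one_two_conj (z y : ZMod m) :
    Equiv.swap 1 2 (y - (z - 1)) - (1 - z) = Equiv.swap z (z + 1) y := by
  rcases eq_or_ne y z with rfl | hz
  · rw [show y - (y - 1) = 1 by ring, Equiv.swap_apply_left, Equiv.swap_apply_left]; ring
  rcases eq_or_ne y (z + 1) with rfl | hz1
  · rw [show z + 1 - (z - 1) = 2 by ring, Equiv.swap_apply_right, Equiv.swap_apply_right]; ring
  rw [Equiv.swap_apply_of_ne_of_ne hz hz1, Equiv.swap_apply_of_ne_of_ne]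
  · ring
  · exact fun h => hz (by linear_combination h)
  · exact fun h => hz1 (by linear_combination h)

structure IsABClosed (R : Finset (ZMod m) → Prop) : Prop where
  rotate_one : ∀ T, R T → R (rotate 1 T)
  swapRestart : ∀ T, R T → R (swapRestart T)

namespace IsABClosed

variable {R : Finset (ZMod m) → Prop}

theorem rotate [NeZero m] (hR : IsABClosed R) {T : Finset (ZMod m)} (hT : R T) (c : ZMod m) :
    R (KleeneStarDn.rotate c T) := by
  rw [← ZMod.natCast_zmod_val c]
  induction c.val with
  | zero => rwa [Nat.cast_zero, rotate_zero]
  | succ k ih =>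
    convert hR.rotate_one _ ih using 1
    ext y
    simp only [mem_rotate, Nat.cast_succ]
    ring_nf

theorem swap_add_one [NeZero m] (hR : IsABClosed R) {T : Finset (ZMod m)} (hT : R T) {z : ZMod m}
    (hz : z - 1 ∉ T) : R (T.map (Equiv.swap z (z + 1)).toEmbedding) := by
  have h0 : (0 : ZMod m) ∉ KleeneStarDn.rotate (1 - z) T := by
    rwa [mem_rotate, show 0 - (1 - z) = z - 1 by ring]
  have h := hR.rotate (hR.swapRestart _ (hR.rotate hT (1 - z))) (z - 1)
  rw [KleeneStarDn.swapRestart, if_neg h0] at h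
  convert h using 1
  ext y
  rw [mem_rotate, Finset.mem_map_equiv, Finset.mem_map_equiv, mem_rotate, Equiv.symm_swap,
    Equiv.symm_swap, swap_one_two_conj]

theorem of_add_two_mem [NeZero m] (hm : 3 ≤ m) (hR : IsABClosed R) {T : Finset (ZMod m)}
    (ih : ∀ U : Finset (ZMod m), U.Nonempty → U.card < T.card → R U) {x : ZMod m}
    (hx : x ∈ T) (hx2 : x + 2 ∈ T) : R T := by
  set V := KleeneStarDn.rotate (-x) T
  have h0V : 0 ∈ V := by rwa [mem_rotate, zero_sub, neg_neg]
  have h2V : 2 ∈ V := by rwa [mem_rotate, sub_neg_eq_add, add_comm]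
  have h02 : (0 : ZMod m) ≠ 2 := (two_ne_zero_of_three_le hm).symm
  have hσ0 : Equiv.swap (1 : ZMod m) 2 0 = 0 :=
    Equiv.swap_apply_of_ne_of_ne (one_ne_zero_of_three_le hm).symm h02
  set U := (V.erase 2).map (Equiv.swap 1 2).toEmbedding
  have h0U : 0 ∈ U := by
    rw [Finset.mem_map_equiv, Equiv.symm_swap, hσ0]
    exact Finset.mem_erase.2 ⟨h02, h0V⟩
  have hUcard : U.card < T.card := by
    rw [Finset.card_map, ← card_rotate (-x) T]
    exact Finset.card_erase_lt_of_mem h2V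
  have hV : R V := by
    have h := hR.swapRestart U (ih U ⟨0, h0U⟩ hUcard)
    rwa [KleeneStarDn.swapRestart, if_pos h0U, map_swap_map_swap, Finset.insert_erase h2V] at h
  convert hR.rotate hV x using 1
  ext y
  rw [mem_rotate, mem_rotate, sub_neg_eq_add, sub_add_cancel]

theorem of_add_natCast_mem [NeZero m] (hm : 3 ≤ m) (hR : IsABClosed R) {T : Finset (ZMod m)}
    (ih : ∀ U : Finset (ZMod m), U.Nonempty → U.card < T.card → R U) {x : ZMod m} {g : ℕ}
    (hg : 2 ≤ g) (hgm : g < m) (hx : x ∈ T) (hxg : x + g ∈ T) : R T := by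
  induction g, hg using Nat.le_induction generalizing T with
  | base => exact hR.of_add_two_mem hm ih hx (by exact_mod_cast hxg)
  | succ g hg IH =>
    push_cast at hxg
    by_cases hpair : x + g - 1 ∈ T
    · exact hR.of_add_two_mem hm ih hpair (by convert hxg using 1; ring)
    by_cases hxg' : x + g ∈ T
    · exact IH ih (by omega) hx hxg'
    -- Moving `x + g + 1` down to `x + g` shortens the gap; `b` can move it back since
    -- `x + g - 1 ∉ T`.
    set τ := Equiv.swap (x + g) (x + g + 1)
    have hτx : τ x = x := by
      refine Equiv.swap_apply_of_ne_of_ne (fun h => ?_) (fun h => ?_)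
      · exact natCast_ne_zero_of_lt (m := m) (k := g) (by omega) (by omega)
          (by linear_combination -h)
      · exact natCast_ne_zero_of_lt (m := m) (k := g + 1) (by omega) hgm
          (by push_cast; linear_combination -h)
    have hτ : τ (x + g - 1) = x + g - 1 := by
      refine Equiv.swap_apply_of_ne_of_ne (fun h => ?_) (fun h => ?_)
      · exact one_ne_zero_of_three_le hm (by linear_combination -h)
      · exact two_ne_zero_of_three_le hm (by linear_combination -h)
    have hT' : R (T.map τ.toEmbedding) := by
      refine IH (fun U hU hUc => ih U hU (by rwa [Finset.card_map] at hUc)) (by omega) ?_ ?_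
      · rwa [Finset.mem_map_equiv, Equiv.symm_swap, hτx]
      · rwa [Finset.mem_map_equiv, Equiv.symm_swap, Equiv.swap_apply_left, add_assoc]
    have h := hR.swap_add_one hT' (z := x + g) (by
      rwa [Finset.mem_map_equiv, Equiv.symm_swap, hτ])
    rwa [map_swap_map_swap] at h

theorem of_nonempty [NeZero m] (hm : 3 ≤ m) (hR : IsABClosed R) (h1 : R {1})
    (T : Finset (ZMod m)) (hT : T.Nonempty) : R T := by
  induction hk : T.card using Nat.strong_induction_on generalizing T with
  | _ k ihk =>
    have ih : ∀ U : Finset (ZMod m), U.Nonempty → U.card < T.card → R U :=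
      fun U hU hUc => ihk _ (hk ▸ hUc) U hU rfl
    obtain ⟨x, hx⟩ := hT
    by_cases hTx : T = {x}
    · have h := hR.rotate h1 (x - 1)
      rwa [rotate_singleton, add_sub_cancel, ← hTx] at h
    obtain ⟨y, hy, hyx⟩ : ∃ y ∈ T, y ≠ x := by
      by_contra! h
      exact hTx (Finset.eq_singleton_iff_unique_mem.2 ⟨hx, h⟩)
    have hval : (y - x).val ≠ 0 := by rwa [Ne, ZMod.val_eq_zero, sub_eq_zero]
    by_cases hgap : 2 ≤ (y - x).val
    · exact hR.of_add_natCast_mem hm ih hgap (ZMod.val_lt _) hx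
        (by rwa [ZMod.natCast_zmod_val, add_sub_cancel])
    -- Here `y = x + 1`, so `x = y + (m - 1)` is a gap of length `m - 1 ≥ 2`.
    have hyx1 : y - x = 1 := by
      rw [← ZMod.natCast_zmod_val (y - x), show (y - x).val = 1 by omega, Nat.cast_one]
    refine hR.of_add_natCast_mem hm ih (g := m - 1) (by omega) (by omega) hy ?_
    rwa [Nat.cast_sub (by omega), ZMod.natCast_self, Nat.cast_one, ← hyx1, zero_sub,
      neg_sub, add_sub_cancel]

end IsABClosed

/-- The state of `D_{m+1}` labelled by a residue mod `m`: the cycle `1 → 2 → ⋯ → m → 1` of the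
letter `a` is identified with `z ↦ z + 1` on `ZMod m`, the final state `m` corresponding to `0`. -/
def toState (z : ZMod m) : ℕ := (z - 1).val + 1

theorem toState_eq_iff [NeZero m] {z : ZMod m} {k : ℕ} :
    toState z = k ↔ 1 ≤ k ∧ k ≤ m ∧ (k : ZMod m) = z := by
  constructor
  · rintro rfl
    refine ⟨by simp [toState], ZMod.val_lt _, ?_⟩
    simp [toState]
  · rintro ⟨hk1, hkm, rfl⟩
    obtain ⟨k, rfl⟩ : ∃ j, k = j + 1 := ⟨k - 1, by omega⟩
    simp [toState, ZMod.val_cast_of_lt (show k < m by omega)]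

theorem toState_one : toState (1 : ZMod m) = 1 := by
  simp [toState]

theorem toState_eq_top_iff [NeZero m] {z : ZMod m} : toState z = m ↔ z = 0 := by
  rw [toState_eq_iff, ZMod.natCast_self, eq_comm]
  have := NeZero.one_le (n := m)
  simp [this]

theorem stepAB_toState_a [NeZero m] (z : ZMod m) :
    stepAB (m + 1) (toState z) AB.a = toState (z + 1) := by
  have hz := (toState_eq_iff.1 (rfl : toState z = _))
  simp only [stepAB, Nat.add_sub_cancel]
  split_ifs with h
  · rw [toState_eq_top_iff] at h
    rw [h, zero_add, toState_one]
  · symm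
    rw [toState_eq_iff]
    refine ⟨by omega, by omega, ?_⟩
    push_cast
    rw [hz.2.2]

theorem stepAB_toState_b [NeZero m] (hm : 3 ≤ m) (z : ZMod m) :
    stepAB (m + 1) (toState z) AB.b = toState (Equiv.swap 1 2 z) := by
  obtain ⟨h1, hm', hz⟩ := toState_eq_iff.1 (rfl : toState z = _)
  simp only [stepAB]
  symm
  split_ifs with h0 h1' h2
  · omega
  · rw [toState_eq_iff]
    rw [h1', Nat.cast_one] at hz
    rw [← hz, Equiv.swap_apply_left]
    exact ⟨by omega, by omega, by norm_num⟩
  · rw [toState_eq_iff]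
    rw [h2, Nat.cast_ofNat] at hz
    rw [← hz, Equiv.swap_apply_right]
    exact ⟨le_rfl, by omega, Nat.cast_one⟩
  · congr 1
    refine Equiv.swap_apply_of_ne_of_ne (fun h => h1' ?_) (fun h => h2 ?_)
    · rw [h, toState_one]
    · rw [toState_eq_iff, h]
      exact ⟨by omega, by omega, Nat.cast_ofNat⟩

theorem stepAB_zero_a : stepAB (m + 1) 0 AB.a = toState (1 : ZMod m) := by
  simp [stepAB, toState_one]

theorem stepAB_zero_b [NeZero m] (hm : 3 ≤ m) : stepAB (m + 1) 0 AB.b = toState (2 : ZMod m) := by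
  rw [show stepAB (m + 1) 0 AB.b = 2 from rfl, eq_comm, toState_eq_iff]
  exact ⟨by norm_num, by omega, Nat.cast_ofNat⟩

theorem toState_mem_accept [NeZero m] {z : ZMod m} :
    toState z ∈ (DnAB (m + 1)).accept ↔ z = 0 := by
  simp [DnAB, toState_eq_top_iff]

def kstarQuot (T : Finset (ZMod m)) : Language AB :=
  (DnAB (m + 1)).kstarFrom (toState '' (T : Set (ZMod m)))

theorem leftQuotient_kstar_a : (LnAB (m + 1))∗.leftQuotient [AB.a] = kstarQuot {(1 : ZMod m)} := by
  rw [LnAB, DFA.leftQuotient_kstar_accepts, kstarQuot, Finset.coe_singleton, Set.image_singleton]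
  exact congrArg _ (congrArg _ stepAB_zero_a)

theorem leftQuotient_kstar_b [NeZero m] (hm : 3 ≤ m) :
    (LnAB (m + 1))∗.leftQuotient [AB.b] = kstarQuot {(2 : ZMod m)} := by
  rw [LnAB, DFA.leftQuotient_kstar_accepts, kstarQuot, Finset.coe_singleton, Set.image_singleton]
  exact congrArg _ (congrArg _ (stepAB_zero_b hm))

theorem leftQuotient_kstarQuot_a [NeZero m] (T : Finset (ZMod m)) :
    (kstarQuot T).leftQuotient [AB.a] = kstarQuot (rotate 1 T) := by
  rw [kstarQuot, DFA.leftQuotient_kstarFrom, kstarQuot]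
  congr 1
  have himg : (fun q => stepAB (m + 1) q AB.a) '' (toState '' (T : Set (ZMod m))) =
      toState '' (rotate 1 T : Set (ZMod m)) := by
    simp only [rotate, Finset.coe_map, Set.image_image, Equiv.coe_toEmbedding, Equiv.coe_addRight,
      stepAB_toState_a]
  refine (Set.union_eq_left.2 ?_).trans himg
  rintro _ ⟨rfl, _, ⟨z, hz, rfl⟩, hF⟩
  rw [toState_mem_accept] at hF
  subst hF
  refine ⟨toState 0, ⟨0, hz, rfl⟩, ?_⟩
  change stepAB (m + 1) (toState 0) AB.a = stepAB (m + 1) 0 AB.a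
  rw [stepAB_toState_a, zero_add, stepAB_zero_a]

theorem leftQuotient_kstarQuot_b [NeZero m] (hm : 3 ≤ m) (T : Finset (ZMod m)) :
    (kstarQuot T).leftQuotient [AB.b] = kstarQuot (swapRestart T) := by
  rw [kstarQuot, DFA.leftQuotient_kstarFrom, kstarQuot]
  congr 1
  have himg : (fun q => stepAB (m + 1) q AB.b) '' (toState '' (T : Set (ZMod m))) =
      toState '' (T.map (Equiv.swap 1 2).toEmbedding : Set (ZMod m)) := by
    simp only [Finset.coe_map, Set.image_image, Equiv.coe_toEmbedding, stepAB_toState_b hm]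
  have hrestart : {p | p = stepAB (m + 1) 0 AB.b ∧
      ∃ q ∈ toState '' (T : Set (ZMod m)), q ∈ (DnAB (m + 1)).accept} =
      {p | p = toState (2 : ZMod m) ∧ (0 : ZMod m) ∈ T} := by
    simp only [Set.exists_mem_image, toState_mem_accept, exists_eq_right, Finset.mem_coe,
      stepAB_zero_b hm]
  change (fun q => stepAB (m + 1) q AB.b) '' _ ∪ {p | p = stepAB (m + 1) 0 AB.b ∧ _} = _
  rw [himg, hrestart, swapRestart]
  ext p
  split_ifs with h0 <;> simp [h0, eq_comm]

theorem evalFrom_toState_replicate [NeZero m] (z : ZMod m) (j : ℕ) :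
    (DnAB (m + 1)).evalFrom (toState z) (List.replicate j AB.a) = toState (z + (j : ZMod m)) := by
  induction j generalizing z with
  | zero => simp
  | succ j ih =>
    rw [List.replicate_succ, DFA.evalFrom_cons]
    change (DnAB (m + 1)).evalFrom (stepAB (m + 1) (toState z) AB.a) _ = _
    rw [stepAB_toState_a, ih]
    push_cast
    rw [add_comm (j : ZMod m), add_assoc]

theorem replicate_mem_acceptsFrom_toState [NeZero m] {z : ZMod m} {j : ℕ} :
    List.replicate j AB.a ∈ (DnAB (m + 1)).acceptsFrom (toState z) ↔ z + j = 0 := by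
  rw [DFA.mem_acceptsFrom, evalFrom_toState_replicate, toState_mem_accept]

theorem replicate_mem_kstar [NeZero m] {k : ℕ} (hk : k < m) :
    List.replicate k AB.a ∈ (LnAB (m + 1))∗ ↔ k = 0 := by
  refine ⟨fun h => ?_, by rintro rfl; exact Language.nil_mem_kstar _⟩
  obtain _ | k := k
  · rfl
  have hquot : (LnAB (m + 1)).leftQuotient [AB.a] =
      (DnAB (m + 1)).acceptsFrom (toState (1 : ZMod m)) := by
    rw [← stepAB_zero_a]
    rfl
  rw [List.replicate_succ, Language.cons_mem_kstar, hquot, Language.replicate_mem_mul] at h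
  obtain ⟨i, hi, hword, -⟩ := h
  rw [replicate_mem_acceptsFrom_toState] at hword
  exact absurd (by push_cast; rwa [add_comm]) (natCast_ne_zero_of_lt (m := m) (k := i + 1)
    (by omega) (by omega))

theorem replicate_mem_kstarQuot [NeZero m] {j : ℕ} (hj : j < m) (T : Finset (ZMod m)) :
    List.replicate j AB.a ∈ kstarQuot T ↔ -(j : ZMod m) ∈ T := by
  rw [kstarQuot, DFA.mem_kstarFrom, Set.exists_mem_image]
  simp only [Finset.mem_coe, Language.replicate_mem_mul, replicate_mem_acceptsFrom_toState]
  constructor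
  · rintro ⟨z, hz, i, hi, hzi, hrest⟩
    obtain rfl : i = j := by have := (replicate_mem_kstar (by omega)).1 hrest; omega
    rwa [← eq_neg_of_add_eq_zero_left hzi]
  · intro h
    exact ⟨_, h, j, le_rfl, neg_add_cancel _, by simpa using Language.nil_mem_kstar _⟩

theorem kstarQuot_injective [NeZero m] : Function.Injective (kstarQuot (m := m)) := by
  intro T T' h
  ext z
  have hz (U : Finset (ZMod m)) := replicate_mem_kstarQuot (ZMod.val_lt (-z)) U
  rw [ZMod.natCast_zmod_val, neg_neg] at hz
  rw [← hz, h, hz]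

theorem kstar_ne_kstarQuot [NeZero m] (hm : 3 ≤ m) (T : Finset (ZMod m)) :
    (LnAB (m + 1))∗ ≠ kstarQuot T := by
  intro h
  by_cases h0 : (0 : ZMod m) ∈ T
  · have hb : [AB.b] ∈ kstarQuot T := by
      refine ⟨toState 0, ⟨0, h0, rfl⟩, [AB.b], ?_, [], Language.nil_mem_kstar _, rfl⟩
      change stepAB (m + 1) (toState 0) AB.b ∈ (DnAB (m + 1)).accept
      rw [stepAB_toState_b hm, Equiv.swap_apply_of_ne_of_ne (one_ne_zero_of_three_le hm).symm
        (two_ne_zero_of_three_le hm).symm, toState_mem_accept]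
    rw [← h, ← List.singleton_append, ← Language.mem_leftQuotient, leftQuotient_kstar_b hm,
      ← List.replicate_zero, replicate_mem_kstarQuot (by omega), Nat.cast_zero, neg_zero,
      Finset.mem_singleton] at hb
    exact two_ne_zero_of_three_le hm hb.symm
  · have hnil := Language.nil_mem_kstar (LnAB (m + 1))
    rw [h, ← List.replicate_zero, replicate_mem_kstarQuot (by omega), Nat.cast_zero,
      neg_zero] at hnil
    exact h0 hnil

/-- Labels the left quotients of `L∗` by subsets of `ZMod m`: a nonempty `T` stands for the
quotient whose subset-construction state is `toState '' T`, and `∅` stands for `L∗` itself. -/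
def quotientOf (T : Finset (ZMod m)) : Language AB :=
  if T = ∅ then (LnAB (m + 1))∗ else kstarQuot T

theorem quotientOf_of_ne_empty {T : Finset (ZMod m)} (hT : T ≠ ∅) : quotientOf T = kstarQuot T :=
  if_neg hT

theorem quotientOf_injective [NeZero m] (hm : 3 ≤ m) :
    Function.Injective (quotientOf (m := m)) := by
  intro T T' h
  rcases eq_or_ne T ∅ with rfl | hT <;> rcases eq_or_ne T' ∅ with rfl | hT'
  · rfl
  · exact absurd h (by rw [quotientOf_of_ne_empty hT']; exact kstar_ne_kstarQuot hm T')
  · exact absurd h.symm (by rw [quotientOf_of_ne_empty hT]; exact kstar_ne_kstarQuot hm T)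
  · rw [quotientOf_of_ne_empty hT, quotientOf_of_ne_empty hT'] at h
    exact kstarQuot_injective h

theorem swapRestart_ne_empty {T : Finset (ZMod m)} (hT : T ≠ ∅) : swapRestart T ≠ ∅ := by
  unfold swapRestart
  split_ifs
  · exact Finset.insert_ne_empty _ _
  · simpa using hT

theorem leftQuotient_quotientOf_mem_range [NeZero m] (hm : 3 ≤ m) (T : Finset (ZMod m)) (c : AB) :
    (quotientOf T).leftQuotient [c] ∈ Set.range (quotientOf (m := m)) := by
  rcases eq_or_ne T ∅ with rfl | hT
  · rw [quotientOf, if_pos rfl]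
    cases c
    · exact ⟨{1}, by
        rw [leftQuotient_kstar_a, quotientOf_of_ne_empty (Finset.singleton_ne_empty _)]⟩
    · exact ⟨{2}, by rw [leftQuotient_kstar_b hm,
        quotientOf_of_ne_empty (Finset.singleton_ne_empty _)]⟩
  · rw [quotientOf_of_ne_empty hT]
    cases c
    · exact ⟨rotate 1 T, by
        rw [leftQuotient_kstarQuot_a, quotientOf_of_ne_empty (by simpa [rotate] using hT)]⟩
    · exact ⟨swapRestart T, by
        rw [leftQuotient_kstarQuot_b hm, quotientOf_of_ne_empty (swapRestart_ne_empty hT)]⟩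

theorem kstarQuot_mem_range_leftQuotient [NeZero m] (hm : 3 ≤ m) {T : Finset (ZMod m)}
    (hT : T.Nonempty) : kstarQuot T ∈ Set.range (LnAB (m + 1))∗.leftQuotient := by
  have h1 : kstarQuot {(1 : ZMod m)} ∈ Set.range (LnAB (m + 1))∗.leftQuotient :=
    ⟨[AB.a], leftQuotient_kstar_a⟩
  refine IsABClosed.of_nonempty (R := fun T => kstarQuot T ∈ Set.range (LnAB (m + 1))∗.leftQuotient)
    hm ⟨fun T h => ?_, fun T h => ?_⟩ h1 T hT
  · rw [← leftQuotient_kstarQuot_a]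
    exact Language.leftQuotient_mem_range_leftQuotient h AB.a
  · rw [← leftQuotient_kstarQuot_b hm]
    exact Language.leftQuotient_mem_range_leftQuotient h AB.b

theorem range_leftQuotient_kstar [NeZero m] (hm : 3 ≤ m) :
    Set.range (LnAB (m + 1))∗.leftQuotient = Set.range (quotientOf (m := m)) := by
  refine subset_antisymm (Language.range_leftQuotient_subset ⟨∅, if_pos rfl⟩ ?_) ?_
  · rintro _ ⟨T, rfl⟩ c
    exact leftQuotient_quotientOf_mem_range hm T c
  · rintro _ ⟨T, rfl⟩
    rcases eq_or_ne T ∅ with rfl | hT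
    · exact ⟨[], (if_pos rfl).symm⟩
    · rw [quotientOf_of_ne_empty hT]
      exact kstarQuot_mem_range_leftQuotient hm (Finset.nonempty_iff_ne_empty.2 hT)

end KleeneStarDn

open KleeneStarDn in
/-- The Kleene star `(L_n(a,b))^*` has state complexity exactly `2^{n-1}`. -/
theorem stmt12 (n : ℕ) (hn : 4 ≤ n) :
    stateComplexity (KStar.kstar (LnAB n) : Language AB) = 2 ^ (n - 1) := by
  obtain ⟨m, rfl⟩ : ∃ m, n = m + 1 := ⟨n - 1, by omega⟩
  have hm : 3 ≤ m := by omega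
  have : NeZero m := ⟨by omega⟩
  rw [stateComplexity_eq_card_range_leftQuotient, range_leftQuotient_kstar hm,
    Nat.card_range_of_injective (quotientOf_injective hm), Nat.card_eq_fintype_card,
    Fintype.card_finset, ZMod.card, Nat.add_sub_cancel]
end

section
/- Let n ≥ 4 and let a and b be the transformations of Q_n = {0,…,n-1} given by qa = q+1 for 0 ≤ q ≤ n-2, (n-1)a = 1, and 0b = 1, 1b = 2, qb = q+1 for 2 ≤ q ≤ n-2, (n-1)b = 2. Then for every k ≥ 0, each element q of {1+2k, …, n-1} has exactly one preimage under the transformation (ab)^k (apply a then b, k times), namely q - 2k. In particular, if S ⊆ {1+2k,…,n-1}, then the full preimage of S under (ab)^k is { q - 2k : q ∈ S }. -/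
/-!
Below the two top states, `ab` is the translation `q ↦ q + 2`, and every value of `ab` above `2`
is produced by that translation. Hence along an orbit of length `k` that ends at
`q ≥ 1 + 2k`, every step is a translation by `2`, which determines the starting point `q - 2k`.
-/

section ShiftIterate

variable {n m : ℕ} {f : Fin n → Fin n}

theorem Fin.val_iterate_of_shift (hshift : ∀ p : Fin n, p.val + m < n → (f p).val = p.val + m) :
    ∀ (k : ℕ) (p : Fin n), p.val + m * k < n → (f^[k] p).val = p.val + m * k
  | 0, p, _ => rfl
  | k + 1, p, hp => by
    rw [Function.iterate_succ_apply, Fin.val_iterate_of_shift hshift k (f p)] <;>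
      rw [hshift p (by lia)] <;> lia

theorem Fin.val_add_of_lt_val_iterate (hlarge : ∀ p : Fin n, m < (f p).val → (f p).val = p.val + m) :
    ∀ (k : ℕ) (p : Fin n), m * k < (f^[k] p).val → (f^[k] p).val = p.val + m * k
  | 0, _, _ => rfl
  | k + 1, p, hp => by
    rw [Function.iterate_succ_apply] at hp ⊢
    have hk := Fin.val_add_of_lt_val_iterate hlarge k (f p) (by lia)
    have hfp := hlarge p (by lia)
    lia

theorem Fin.iterate_eq_iff_val_add (hshift : ∀ p : Fin n, p.val + m < n → (f p).val = p.val + m)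
    (hlarge : ∀ p : Fin n, m < (f p).val → (f p).val = p.val + m) {k : ℕ} {p q : Fin n}
    (hq : m * k < q.val) : f^[k] p = q ↔ p.val + m * k = q.val := by
  constructor
  · rintro rfl
    exact (Fin.val_add_of_lt_val_iterate hlarge k p hq).symm
  · intro hpq
    exact Fin.ext (by rw [Fin.val_iterate_of_shift hshift k p (by lia)]; exact hpq)

end ShiftIterate

section Transformations

variable {n : ℕ} {a b : Fin n → Fin n}
  (ha : ∀ q : Fin n, (a q).val = if q.val = n - 1 then 1 else q.val + 1)
  (hb : ∀ q : Fin n, (b q).val = if q.val = n - 1 then 2 else q.val + 1)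
include ha hb

theorem val_comp_of_add_two_lt (p : Fin n) (hp : p.val + 2 < n) : (b (a p)).val = p.val + 2 := by
  rw [hb, ha]
  split_ifs <;> lia

theorem val_comp_of_two_lt (p : Fin n) (hp : 2 < (b (a p)).val) : (b (a p)).val = p.val + 2 := by
  have hpn := p.isLt
  rw [hb, ha] at hp ⊢
  split_ifs at hp ⊢ <;> lia

end Transformations

theorem stmt13_general (n : ℕ) (a b : Fin n → Fin n)
    (ha : ∀ q : Fin n, (a q).val = if q.val = n - 1 then 1 else q.val + 1)
    (hb : ∀ q : Fin n, (b q).val = if q.val = n - 1 then 2 else q.val + 1) :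
    ∀ k : ℕ,
      (∀ q : Fin n, 1 + 2 * k ≤ q.val →
        (∃! p : Fin n, (fun x => b (a x))^[k] p = q) ∧
        (∀ p : Fin n, (fun x => b (a x))^[k] p = q → p.val + 2 * k = q.val)) ∧
      (∀ S : Set (Fin n), (∀ q ∈ S, 1 + 2 * k ≤ q.val) →
        (fun x => b (a x))^[k] ⁻¹' S = {p : Fin n | ∃ q ∈ S, p.val + 2 * k = q.val}) := by
  intro k
  have iterate_eq_iff {p q : Fin n} (hq : 1 + 2 * k ≤ q.val) :
      (fun x => b (a x))^[k] p = q ↔ p.val + 2 * k = q.val :=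
    Fin.iterate_eq_iff_val_add (val_comp_of_add_two_lt ha hb) (val_comp_of_two_lt ha hb) (by lia)
  refine ⟨fun q hq => ⟨?_, fun p => (iterate_eq_iff hq).1⟩, fun S hS => ?_⟩
  · refine ⟨⟨q.val - 2 * k, by lia⟩, (iterate_eq_iff hq).2 (by simp only; lia), fun p hp => ?_⟩
    exact Fin.ext (by have := (iterate_eq_iff hq).1 hp; simp only; lia)
  · ext p
    constructor
    · exact fun hp => ⟨_, hp, (iterate_eq_iff (hS _ hp)).1 rfl⟩
    · rintro ⟨q, hqS, hpq⟩
      rwa [Set.mem_preimage, (iterate_eq_iff (hS q hqS)).2 hpq]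

/-- Let `a : (1,…,n-1)(0→1)` and `b : (2,…,n-1)(1→2)(0→1)` be transformations of
`Q_n = {0,…,n-1}`. For every `k ≥ 0`, each `q ∈ {1+2k,…,n-1}` has exactly one preimage
under `(ab)^k` (apply `a` then `b`, `k` times), namely `q - 2k`; consequently, the full
preimage of any `S ⊆ {1+2k,…,n-1}` under `(ab)^k` is `{q - 2k : q ∈ S}`. -/
theorem stmt13 (n : ℕ) (hn : 4 ≤ n) (a b : Fin n → Fin n)
    (ha : ∀ q : Fin n, (a q).val = if q.val = n - 1 then 1 else q.val + 1)
    (hb : ∀ q : Fin n, (b q).val = if q.val = n - 1 then 2 else q.val + 1) :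
    ∀ k : ℕ,
      (∀ q : Fin n, 1 + 2 * k ≤ q.val →
        (∃! p : Fin n, (fun x => b (a x))^[k] p = q) ∧
        (∀ p : Fin n, (fun x => b (a x))^[k] p = q → p.val + 2 * k = q.val)) ∧
      (∀ S : Set (Fin n), (∀ q ∈ S, 1 + 2 * k ≤ q.val) →
        (fun x => b (a x))^[k] ⁻¹' S = {p : Fin n | ∃ q ∈ S, p.val + 2 * k = q.val}) :=
  stmt13_general n a b ha hb
end
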